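/- arXiv:1805.10806 — 9 statements merged into one kernel-verified Lean document; each statement's English description precedes it below -/
import Mathlib

section
/- Let S be an irreducible Cl(V)-module with an invariant pairing ⟨−,−⟩ : S ⊗ S → ℂ satisfying ⟨ρ(v)Q₁, ρ(v)Q₂⟩ = ⟨Q₁,Q₂⟩ for unit vectors v, and define Γ : S ⊗ S → V by (v, Γ(Q₁,Q₂)) = ⟨ρ(v)Q₁, Q₂⟩. Then for any spinor Q, the image S_Q of the map Γ(Q,−) : S → V equals the orthogonal complement T_Q^⊥ of the nullspace T_Q = {v ∈ V : ρ(v)Q = 0}. -/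
/-!
Since `(w, Γ(Q, t)) = ⟨ρ(w)Q, t⟩` and `⟨-,-⟩` is nondegenerate, a vector `w` is orthogonal to the
whole image `S_Q` exactly when `ρ(w)Q = 0`; that is, `S_Q^⊥ = T_Q`. Taking orthogonal complements
once more, which is an involution on subspaces of the finite-dimensional space `V`, gives
`S_Q = T_Q^⊥`.
-/

open Module CliffordAlgebra LinearMap.BilinForm

section Orthogonal

variable {K V S : Type*} [Field K] [AddCommGroup V] [Module K V] [AddCommGroup S] [Module K S]
  {B : LinearMap.BilinForm K V} {pr : S →ₗ[K] S →ₗ[K] K} {g : S →ₗ[K] V} {h : V → S}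

theorem mem_orthogonal_range_iff (hB : B.IsRefl) (hpr : pr.SeparatingLeft)
    (hg : ∀ w t, B w (g t) = pr (h w) t) {w : V} :
    w ∈ B.orthogonal (LinearMap.range g) ↔ h w = 0 := by
  constructor
  · intro hw
    exact hpr _ fun t => (hg w t).symm.trans (hB _ _ (hw _ ⟨t, rfl⟩))
  · rintro hw _ ⟨t, rfl⟩
    exact hB _ _ ((hg w t).trans (by rw [hw, map_zero, LinearMap.zero_apply]))

theorem coe_range_eq_orthogonal_zeroSet [FiniteDimensional K V] (hB : B.Nondegenerate)
    (hBr : B.IsRefl) (hpr : pr.SeparatingLeft) (hg : ∀ w t, B w (g t) = pr (h w) t) :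
    (LinearMap.range g : Set V) = {v | ∀ w, h w = 0 → B w v = 0} := by
  rw [← orthogonal_orthogonal hB hBr (LinearMap.range g)]
  ext v
  simp only [SetLike.mem_coe, mem_orthogonal_iff, mem_orthogonal_range_iff hBr hpr hg,
    Set.mem_ofPred_eq]

end Orthogonal

theorem stmt1_general
    {V : Type*} [AddCommGroup V] [Module ℂ V] [FiniteDimensional ℂ V]
    (Qf : QuadraticForm ℂ V) (B : V →ₗ[ℂ] V →ₗ[ℂ] ℂ)
    (hBsymm : ∀ v w : V, B v w = B w v)
    (hBnd : ∀ v : V, (∀ w : V, B v w = 0) → v = 0)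
    {S : Type*} [AddCommGroup S] [Module ℂ S]
    [Module (CliffordAlgebra Qf) S]
    (pr : S →ₗ[ℂ] S →ₗ[ℂ] ℂ)
    (hprnd : ∀ s : S, s ≠ 0 → ∃ t : S, pr s t ≠ 0)
    (Γ : S →ₗ[ℂ] S →ₗ[ℂ] V)
    (hΓ : ∀ (v : V) (s t : S), B v (Γ s t) = pr (ι Qf v • s) t)
    (Q : S) :
    {v : V | ∃ s : S, Γ Q s = v} =
      {v : V | ∀ w : V, ι Qf w • Q = 0 → B w v = 0} := by
  have hBr : LinearMap.IsRefl B := fun v w hvw => (hBsymm w v).trans hvw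
  have hB : B.Nondegenerate := ⟨hBnd, fun v hv => hBnd v fun w => (hBsymm v w).trans (hv w)⟩
  have hpr : pr.SeparatingLeft := fun s hs => by
    by_contra hs0
    obtain ⟨t, ht⟩ := hprnd s hs0
    exact ht (hs t)
  exact coe_range_eq_orthogonal_zeroSet (g := Γ Q) hB hBr hpr fun w t => hΓ w Q t

/-- For an irreducible Clifford module `S` with invariant pairing `pr` and the
vector-valued pairing `Γ` defined by `B v (Γ s t) = pr (ι v • s) t`, the image
`S_Q` of `Γ Q (-)` equals the orthogonal complement of the nullspace
`T_Q = {v | ι v • Q = 0}`. -/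
theorem stmt1
    {V : Type*} [AddCommGroup V] [Module ℂ V] [FiniteDimensional ℂ V]
    (Qf : QuadraticForm ℂ V) (B : V →ₗ[ℂ] V →ₗ[ℂ] ℂ)
    (hBsymm : ∀ v w : V, B v w = B w v)
    (hQB : ∀ v : V, Qf v = B v v)
    (hBnd : ∀ v : V, (∀ w : V, B v w = 0) → v = 0)
    {S : Type*} [AddCommGroup S] [Module ℂ S] [FiniteDimensional ℂ S]
    [Module (CliffordAlgebra Qf) S] [IsScalarTower ℂ (CliffordAlgebra Qf) S]
    [IsSimpleModule (CliffordAlgebra Qf) S]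
    (pr : S →ₗ[ℂ] S →ₗ[ℂ] ℂ)
    (hprnd : ∀ s : S, s ≠ 0 → ∃ t : S, pr s t ≠ 0)
    (hprinv : ∀ v : V, Qf v = 1 → ∀ s t : S, pr (ι Qf v • s) (ι Qf v • t) = pr s t)
    (Γ : S →ₗ[ℂ] S →ₗ[ℂ] V)
    (hΓ : ∀ (v : V) (s t : S), B v (Γ s t) = pr (ι Qf v • s) t)
    (Q : S) :
    {v : V | ∃ s : S, Γ Q s = v} =
      {v : V | ∀ w : V, ι Qf w • Q = 0 → B w v = 0} :=
  stmt1_general Qf B hBsymm hBnd pr hprnd Γ hΓ Q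
end

section
/- With the setup of the spinor pairing Γ : S ⊗ S → V, if Q is a pure spinor (i.e. its nullspace T_Q is maximal isotropic) in even dimension n = 2m, then the image S_Q of Γ(Q,−) equals T_Q and has dimension m; if n = 2m+1 is odd, then S_Q = T_Q^⊥ has dimension m+1 and contains T_Q as a codimension-1 subspace. -/
open Module CliffordAlgebra
open LinearMap (BilinForm)

/-! Since `Γ` is adjoint to the Clifford action, `v` is orthogonal to `S_Q` iff `ρ(v)Q` pairs to zero
with every spinor, i.e. iff `v ∈ T_Q`; thus `S_Q^⊥ = T_Q` and `S_Q = T_Q^⊥` by nondegeneracy. The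
Clifford relation `ρ(v)ρ(w) + ρ(w)ρ(v) = 2(v, w)` shows that `T_Q` is isotropic, so `T_Q ≤ S_Q`, and
`dim S_Q = n - ⌊n/2⌋` settles both parities. -/

section Clifford

variable {K V M : Type*} [Field K] [AddCommGroup V] [Module K V] {Qf : QuadraticForm K V}
  [AddCommGroup M] [Module K M] [Module (CliffordAlgebra Qf) M]

theorem polar_eq_zero_of_ι_smul_eq_zero [IsScalarTower K (CliffordAlgebra Qf) M]
    {x : M} (hx : x ≠ 0) {v w : V} (hv : ι Qf v • x = 0) (hw : ι Qf w • x = 0) :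
    QuadraticMap.polar Qf v w = 0 := by
  have h : (ι Qf v * ι Qf w + ι Qf w * ι Qf v) • x = 0 := by
    rw [add_smul, mul_smul, mul_smul, hv, hw, smul_zero, smul_zero, add_zero]
  rw [ι_mul_ι_add_swap, algebraMap_smul] at h
  exact (smul_eq_zero.1 h).resolve_right hx

theorem mem_orthogonal_range_iff_ι_smul_eq_zero {B : V →ₗ[K] V →ₗ[K] K}
    (hBsymm : ∀ v w : V, B v w = B w v) {pr : M →ₗ[K] M →ₗ[K] K}
    (hprnd : ∀ s : M, s ≠ 0 → ∃ t : M, pr s t ≠ 0) {Γ : M →ₗ[K] M →ₗ[K] V}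
    (hΓ : ∀ (v : V) (s t : M), B v (Γ s t) = pr (ι Qf v • s) t) (x : M) (v : V) :
    v ∈ BilinForm.orthogonal B (LinearMap.range (Γ x)) ↔ ι Qf v • x = 0 := by
  simp only [BilinForm.mem_orthogonal_iff, LinearMap.mem_range,
    forall_exists_index, forall_apply_eq_imp_iff, hBsymm _ v, hΓ]
  refine ⟨fun h => ?_, fun h t => by rw [h, map_zero, LinearMap.zero_apply]⟩
  by_contra hne
  obtain ⟨t, ht⟩ := hprnd _ hne
  exact ht (h t)

end Clifford

theorem stmt2_general
    {V : Type*} [AddCommGroup V] [Module ℂ V] [FiniteDimensional ℂ V]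
    (Qf : QuadraticForm ℂ V) (B : V →ₗ[ℂ] V →ₗ[ℂ] ℂ)
    (hBsymm : ∀ v w : V, B v w = B w v)
    (hQB : ∀ v : V, Qf v = B v v)
    (hBnd : ∀ v : V, (∀ w : V, B v w = 0) → v = 0)
    {S : Type*} [AddCommGroup S] [Module ℂ S]
    [Module (CliffordAlgebra Qf) S] [IsScalarTower ℂ (CliffordAlgebra Qf) S]
    (pr : S →ₗ[ℂ] S →ₗ[ℂ] ℂ)
    (hprnd : ∀ s : S, s ≠ 0 → ∃ t : S, pr s t ≠ 0)
    (Γ : S →ₗ[ℂ] S →ₗ[ℂ] V)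
    (hΓ : ∀ (v : V) (s t : S), B v (Γ s t) = pr (ι Qf v • s) t)
    (n : ℕ) (hn : finrank ℂ V = n)
    (Q : S) (hQ0 : Q ≠ 0)
    (T SQ Tperp : Submodule ℂ V)
    (hT : ∀ v : V, v ∈ T ↔ ι Qf v • Q = 0)
    (hSQ : ∀ v : V, v ∈ SQ ↔ ∃ s : S, Γ Q s = v)
    (hTperp : ∀ v : V, v ∈ Tperp ↔ ∀ w ∈ T, B w v = 0)
    (hpure : finrank ℂ T = n / 2) :
    (∀ m : ℕ, n = 2 * m → SQ = T ∧ finrank ℂ SQ = m) ∧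
    (∀ m : ℕ, n = 2 * m + 1 →
      SQ = Tperp ∧ finrank ℂ SQ = m + 1 ∧ T ≤ SQ ∧
        finrank ℂ SQ = finrank ℂ T + 1) := by
  have hnd : BilinForm.Nondegenerate B := ⟨hBnd, fun v h => hBnd v fun w => hBsymm v w ▸ h w⟩
  have hTperp_eq : Tperp = BilinForm.orthogonal B T := by
    ext v; rw [hTperp, BilinForm.mem_orthogonal_iff]
  have hSQ_eq : SQ = LinearMap.range (Γ Q) := by ext v; rw [hSQ]; rfl
  have hT_eq : T = BilinForm.orthogonal B SQ := by
    ext v; rw [hT, hSQ_eq, mem_orthogonal_range_iff_ι_smul_eq_zero hBsymm hprnd hΓ]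
  have hSQ_Tperp : SQ = Tperp := by
    rw [hTperp_eq, hT_eq, BilinForm.orthogonal_orthogonal hnd
      fun x y h => (hBsymm y x).trans h]
  have hT_le : T ≤ SQ := fun v hv => by
    refine hSQ_Tperp ▸ (hTperp v).2 fun w hw => ?_
    have hpolar := polar_eq_zero_of_ι_smul_eq_zero hQ0 ((hT w).1 hw) ((hT v).1 hv)
    simp only [QuadraticMap.polar, hQB, map_add, LinearMap.add_apply, hBsymm v w] at hpolar
    linear_combination hpolar / 2
  have hdim : finrank ℂ SQ = n - n / 2 := by
    rw [hSQ_Tperp, hTperp_eq, BilinForm.finrank_orthogonal hnd, hn, hpure]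
  refine ⟨fun m hm => ?_, fun m hm => ?_⟩
  · have hdimSQ : finrank ℂ SQ = m := by omega
    refine ⟨(Submodule.eq_of_le_of_finrank_le hT_le (by omega)).symm, hdimSQ⟩
  · exact ⟨hSQ_Tperp, by omega, hT_le, by omega⟩

/-- For a pure spinor `Q` (nullspace `T_Q` maximal isotropic, of dimension `⌊n/2⌋`):
in even dimension `n = 2m` the image `S_Q` of `Γ(Q,-)` equals `T_Q` and has
dimension `m`; in odd dimension `n = 2m+1` it equals `T_Q^⊥`, has dimension `m+1`,
and contains `T_Q` as a codimension-1 subspace. -/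
theorem stmt2
    {V : Type*} [AddCommGroup V] [Module ℂ V] [FiniteDimensional ℂ V]
    (Qf : QuadraticForm ℂ V) (B : V →ₗ[ℂ] V →ₗ[ℂ] ℂ)
    (hBsymm : ∀ v w : V, B v w = B w v)
    (hQB : ∀ v : V, Qf v = B v v)
    (hBnd : ∀ v : V, (∀ w : V, B v w = 0) → v = 0)
    {S : Type*} [AddCommGroup S] [Module ℂ S] [FiniteDimensional ℂ S]
    [Module (CliffordAlgebra Qf) S] [IsScalarTower ℂ (CliffordAlgebra Qf) S]
    [IsSimpleModule (CliffordAlgebra Qf) S]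
    (pr : S →ₗ[ℂ] S →ₗ[ℂ] ℂ)
    (hprnd : ∀ s : S, s ≠ 0 → ∃ t : S, pr s t ≠ 0)
    (hprinv : ∀ v : V, Qf v = 1 → ∀ s t : S, pr (ι Qf v • s) (ι Qf v • t) = pr s t)
    (Γ : S →ₗ[ℂ] S →ₗ[ℂ] V)
    (hΓ : ∀ (v : V) (s t : S), B v (Γ s t) = pr (ι Qf v • s) t)
    (n : ℕ) (hn : finrank ℂ V = n)
    (Q : S) (hQ0 : Q ≠ 0)
    (T SQ Tperp : Submodule ℂ V)
    (hT : ∀ v : V, v ∈ T ↔ ι Qf v • Q = 0)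
    (hSQ : ∀ v : V, v ∈ SQ ↔ ∃ s : S, Γ Q s = v)
    (hTperp : ∀ v : V, v ∈ Tperp ↔ ∀ w ∈ T, B w v = 0)
    (hpure : finrank ℂ T = n / 2) :
    (∀ m : ℕ, n = 2 * m → SQ = T ∧ finrank ℂ SQ = m) ∧
    (∀ m : ℕ, n = 2 * m + 1 →
      SQ = Tperp ∧ finrank ℂ SQ = m + 1 ∧ T ≤ SQ ∧
        finrank ℂ SQ = finrank ℂ T + 1) :=
  stmt2_general Qf B hBsymm hQB hBnd pr hprnd Γ hΓ n hn Q hQ0 T SQ Tperp hT hSQ hTperp hpure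
end

section
/- Let V = ℂ³ be the vector representation of so(3,ℂ) and S = ℂ² the spin representation, with the equivariant isomorphism Sym²(S) ≅ V. Let W be a finite-dimensional complex vector space with a nondegenerate symmetric bilinear pairing. A supercharge Q ∈ S ⊗ W squares to zero under the induced bracket Sym²(S ⊗ W) → Sym²(S) ⊗ Sym²(W) → V (using the pairing on W) if and only if the image of the induced map Q : S* → W is a totally isotropic subspace of W. -/
/-!
Write `Q = ∑ sᵢ ⊗ wᵢ` and `bᵢ = ∑ⱼ B(wᵢ, wⱼ) sⱼ`. Then `[Q,Q] = ∑ Γ(sᵢ, bᵢ)` and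
`B(Qf, Qg) = ∑ f(sᵢ) g(bᵢ)`. Injectivity of `Sym²(S) → V` turns `[Q,Q] = 0` into
`B(Qf, Qg) + B(Qg, Qf) = 0`, and symmetry of `B` halves this. Conversely, if every
`B(Qf, Qg)` vanishes then `∑ f(sᵢ) bᵢ = 0` for all `f`, and expanding the `sᵢ` in a basis
of `S` shows `∑ Γ(sᵢ, bᵢ) = 0`.
-/

open Module

section Contraction

variable {R S W P ι : Type*} [CommRing R] [AddCommGroup S] [Module R S]
  [AddCommGroup W] [Module R W] [AddCommGroup P] [Module R P] [Fintype ι]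

def contractPairing (B : W →ₗ[R] W →ₗ[R] R) (s : ι → S) (w : ι → W) (i : ι) : S :=
  ∑ j, B (w i) (w j) • s j

theorem sum_sum_smul_eq_sum_contractPairing (B : W →ₗ[R] W →ₗ[R] R)
    (Γ : S →ₗ[R] S →ₗ[R] P) (s : ι → S) (w : ι → W) :
    ∑ i, ∑ j, B (w i) (w j) • Γ (s i) (s j) = ∑ i, Γ (s i) (contractPairing B s w i) := by
  simp only [contractPairing, map_sum, map_smul]

theorem pairing_sum_smul_eq_sum_contractPairing (B : W →ₗ[R] W →ₗ[R] R)
    (s : ι → S) (w : ι → W) (f g : Dual R S) :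
    B (∑ i, f (s i) • w i) (∑ j, g (s j) • w j)
      = ∑ i, f (s i) * g (contractPairing B s w i) := by
  simp only [contractPairing, map_sum, map_smul, LinearMap.sum_apply, LinearMap.smul_apply,
    smul_eq_mul, Finset.mul_sum]
  rw [Finset.sum_comm]
  exact Finset.sum_congr rfl fun i _ => Finset.sum_congr rfl fun j _ => by ring

end Contraction

theorem sum_bilin_eq_zero_of_forall_dual {R M N P ι : Type*} [CommRing R]
    [AddCommGroup M] [Module R M] [Module.Free R M] [Module.Finite R M]
    [AddCommGroup N] [Module R N] [AddCommGroup P] [Module R P] [Fintype ι]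
    (Γ : M →ₗ[R] N →ₗ[R] P) (x : ι → M) (y : ι → N)
    (h : ∀ f : Dual R M, ∑ i, f (x i) • y i = 0) :
    ∑ i, Γ (x i) (y i) = 0 := by
  let e := Module.Free.chooseBasis R M
  calc ∑ i, Γ (x i) (y i)
      = ∑ i, ∑ p, Γ (e.repr (x i) p • e p) (y i) := by
        simp only [← LinearMap.sum_apply, ← map_sum, e.sum_repr]
    _ = ∑ p, Γ (e p) (∑ i, e.repr (x i) p • y i) := by
        rw [Finset.sum_comm]
        simp only [map_sum, map_smul, LinearMap.smul_apply]
    _ = 0 := by simp only [← e.coord_apply, h, map_zero, Finset.sum_const_zero]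

theorem stmt3_general
    {S V W : Type*}
    [AddCommGroup S] [Module ℂ S] [FiniteDimensional ℂ S]
    [AddCommGroup V] [Module ℂ V]
    [AddCommGroup W] [Module ℂ W]
    (Γ : S →ₗ[ℂ] S →ₗ[ℂ] V)
    (hΓinj : ∀ (m : ℕ) (a b : Fin m → S), (∑ i, Γ (a i) (b i)) = 0 →
      ∀ f g : Module.Dual ℂ S, (∑ i, (f (a i) * g (b i) + f (b i) * g (a i))) = 0)
    (BW : W →ₗ[ℂ] W →ₗ[ℂ] ℂ)
    (hBWsym : ∀ u v : W, BW u v = BW v u)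
    (k : ℕ) (s : Fin k → S) (w : Fin k → W) :
    (∑ i, ∑ j, BW (w i) (w j) • Γ (s i) (s j)) = 0 ↔
      ∀ f g : Module.Dual ℂ S,
        BW (∑ i, f (s i) • w i) (∑ j, g (s j) • w j) = 0 := by
  rw [sum_sum_smul_eq_sum_contractPairing]
  constructor
  · intro h f g
    have hΓfg := hΓinj k s (contractPairing BW s w) h f g
    simp_rw [Finset.sum_add_distrib, mul_comm (f _) (g (s _)),
      ← pairing_sum_smul_eq_sum_contractPairing, hBWsym (∑ j, g (s j) • w j)] at hΓfg
    exact add_self_eq_zero.mp hΓfg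
  · intro h
    refine sum_bilin_eq_zero_of_forall_dual Γ s _ fun f => ?_
    refine (Module.forall_dual_apply_eq_zero_iff ℂ _).mp fun g => ?_
    simpa only [map_sum, map_smul, smul_eq_mul, ← pairing_sum_smul_eq_sum_contractPairing]
      using h f g

/-- Dimension 3: with `S = ℂ²`, `V = ℂ³`, `Sym²(S) ≅ V` via the symmetric pairing `Γ`,
and `W` carrying a nondegenerate symmetric pairing `BW`, a supercharge
`Q = ∑ sᵢ ⊗ wᵢ ∈ S ⊗ W` squares to zero iff the image of the induced map
`S* → W`, `f ↦ ∑ f(sᵢ) • wᵢ`, is totally isotropic in `W`. -/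
theorem stmt3
    {S V W : Type*}
    [AddCommGroup S] [Module ℂ S] [FiniteDimensional ℂ S]
    [AddCommGroup V] [Module ℂ V] [FiniteDimensional ℂ V]
    [AddCommGroup W] [Module ℂ W] [FiniteDimensional ℂ W]
    (hS : finrank ℂ S = 2) (hV : finrank ℂ V = 3)
    (Γ : S →ₗ[ℂ] S →ₗ[ℂ] V)
    (hΓsym : ∀ s t : S, Γ s t = Γ t s)
    (hΓsurj : Submodule.span ℂ {v : V | ∃ s t : S, Γ s t = v} = ⊤)
    (hΓinj : ∀ (m : ℕ) (a b : Fin m → S), (∑ i, Γ (a i) (b i)) = 0 →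
      ∀ f g : Module.Dual ℂ S, (∑ i, (f (a i) * g (b i) + f (b i) * g (a i))) = 0)
    (BW : W →ₗ[ℂ] W →ₗ[ℂ] ℂ)
    (hBWsym : ∀ u v : W, BW u v = BW v u)
    (hBWnd : ∀ u : W, (∀ v : W, BW u v = 0) → u = 0)
    (k : ℕ) (s : Fin k → S) (w : Fin k → W) :
    (∑ i, ∑ j, BW (w i) (w j) • Γ (s i) (s j)) = 0 ↔
      ∀ f g : Module.Dual ℂ S,
        BW (∑ i, f (s i) • w i) (∑ j, g (s j) • w j) = 0 :=
  stmt3_general Γ hΓinj BW hBWsym k s w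
end

section
/- Let S₊, S₋ be the two 2-dimensional semi-spin representations of so(4,ℂ), with the equivariant isomorphism Γ : S₊ ⊗ S₋ ≅ V = ℂ⁴. Let W be a finite-dimensional complex vector space. A supercharge Q = Q₊ + Q₋ ∈ S₊ ⊗ W ⊕ S₋ ⊗ W* squares to zero (with respect to the bracket induced by Γ and the evaluation pairing W ⊗ W* → ℂ) if and only if ⟨W_{Q₋}, W_{Q₊}⟩ = 0, where W_{Q₊} ⊆ W and W_{Q₋} ⊆ W* are the images of the induced maps S₊* → W and S₋* → W*, and ⟨−,−⟩ is the natural pairing between W* and W. -/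
/-!
Both sides only depend on the tensor `T = ∑ᵢ ∑ⱼ fⱼ(wᵢ) spᵢ ⊗ smⱼ ∈ S₊ ⊗ S₋`: the bracket `[Q, Q]`
is `Γ(T)`, and the pairing of `∑ⱼ h(smⱼ) fⱼ ∈ W_{Q₋}` with `∑ᵢ g(spᵢ) wᵢ ∈ W_{Q₊}` is `(g ⊗ h)(T)`.
Since `Γ` is injective on `S₊ ⊗ S₋` and the functionals `g ⊗ h` separate points of a tensor
product of free modules (they include the coordinates of a product basis), `Γ(T) = 0` iff
`(g ⊗ h)(T) = 0` for all `g, h`.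
-/

open Module

section

variable {R M N P W : Type*} [CommSemiring R]
  [AddCommMonoid M] [Module R M] [AddCommMonoid N] [Module R N] [AddCommMonoid P] [Module R P]
  [AddCommMonoid W] [Module R W]

theorem TensorProduct.sum_tmul_eq_zero_of_forall_dual [Module.Free R M] [Module.Free R N]
    {ι : Type*} [Fintype ι] (a : ι → M) (b : ι → N)
    (hab : ∀ (g : Dual R M) (h : Dual R N), ∑ i, g (a i) * h (b i) = 0) :
    ∑ i, a i ⊗ₜ[R] b i = 0 := by
  let bM := Module.Free.chooseBasis R M
  let bN := Module.Free.chooseBasis R N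
  refine (bM.tensorProduct bN).ext_elem fun ⟨p, q⟩ => ?_
  simpa [mul_comm] using hab (bM.coord p) (bN.coord q)

theorem LinearMap.sum_apply₂_eq_zero_of_forall_dual [Module.Free R M] [Module.Free R N]
    {ι : Type*} [Fintype ι] (B : M →ₗ[R] N →ₗ[R] P) (a : ι → M) (b : ι → N)
    (hab : ∀ (g : Dual R M) (h : Dual R N), ∑ i, g (a i) * h (b i) = 0) :
    ∑ i, B (a i) (b i) = 0 := by
  simpa using
    congr_arg (TensorProduct.lift B) (TensorProduct.sum_tmul_eq_zero_of_forall_dual a b hab)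

theorem LinearMap.sum_dual_mul_eq_zero_of_sum_apply₂_eq_zero (B : M →ₗ[R] N →ₗ[R] P)
    (hB : ∀ (m : ℕ) (a : Fin m → M) (b : Fin m → N), ∑ i, B (a i) (b i) = 0 →
      ∀ (g : Dual R M) (h : Dual R N), ∑ i, g (a i) * h (b i) = 0)
    {ι : Type*} [Fintype ι] (a : ι → M) (b : ι → N) (hab : ∑ i, B (a i) (b i) = 0)
    (g : Dual R M) (h : Dual R N) :
    ∑ i, g (a i) * h (b i) = 0 := by
  let e := Fintype.equivFin ι
  rw [← e.symm.sum_comp] at hab ⊢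
  exact hB _ (a ∘ e.symm) (b ∘ e.symm) hab g h

variable {ι κ : Type*} [Fintype ι] [Fintype κ]

theorem LinearMap.sum_sum_smul_apply₂_eq_sum_prod (B : M →ₗ[R] N →ₗ[R] P) (m : ι → M)
    (w : ι → W) (n : κ → N) (f : κ → Dual R W) :
    ∑ i, ∑ j, f j (w i) • B (m i) (n j) = ∑ x : ι × κ, B (f x.2 (w x.1) • m x.1) (n x.2) := by
  simp only [map_smul, LinearMap.smul_apply, Fintype.sum_prod_type]

theorem Module.Dual.sum_smul_apply_sum_smul (m : ι → M) (w : ι → W) (n : κ → N)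
    (f : κ → Dual R W) (g : Dual R M) (h : Dual R N) :
    (∑ j, h (n j) • f j) (∑ i, g (m i) • w i) =
      ∑ x : ι × κ, g (f x.2 (w x.1) • m x.1) * h (n x.2) := by
  simp only [LinearMap.sum_apply, LinearMap.smul_apply, map_sum, map_smul, smul_eq_mul,
    Fintype.sum_prod_type, Finset.mul_sum]
  exact Finset.sum_congr rfl fun i _ => Finset.sum_congr rfl fun j _ => by ring

end

theorem stmt5_general
    {Sp Sm V W : Type*}
    [AddCommGroup Sp] [Module ℂ Sp]
    [AddCommGroup Sm] [Module ℂ Sm]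
    [AddCommGroup V] [Module ℂ V]
    [AddCommGroup W] [Module ℂ W]
    (Γ : Sp →ₗ[ℂ] Sm →ₗ[ℂ] V)
    (hΓinj : ∀ (m : ℕ) (a : Fin m → Sp) (b : Fin m → Sm),
      (∑ i, Γ (a i) (b i)) = 0 →
      ∀ (g : Module.Dual ℂ Sp) (h : Module.Dual ℂ Sm),
        (∑ i, g (a i) * h (b i)) = 0)
    (k l : ℕ) (sp : Fin k → Sp) (w : Fin k → W)
    (sm : Fin l → Sm) (f : Fin l → Module.Dual ℂ W) :
    (∑ i, ∑ j, (f j) (w i) • Γ (sp i) (sm j)) = 0 ↔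
      ∀ (g : Module.Dual ℂ Sp) (h : Module.Dual ℂ Sm),
        (∑ j, h (sm j) • f j) (∑ i, g (sp i) • w i) = 0 := by
  simp only [Γ.sum_sum_smul_apply₂_eq_sum_prod, Module.Dual.sum_smul_apply_sum_smul]
  exact ⟨Γ.sum_dual_mul_eq_zero_of_sum_apply₂_eq_zero hΓinj _ _,
    Γ.sum_apply₂_eq_zero_of_forall_dual _ _⟩

/-- Dimension 4: with `S₊, S₋` the 2-dimensional semi-spin representations and
`Γ : S₊ ⊗ S₋ ≅ V = ℂ⁴`, a supercharge `Q = Q₊ + Q₋ ∈ S₊ ⊗ W ⊕ S₋ ⊗ W*`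
(represented by finite families) squares to zero iff `⟨W_{Q₋}, W_{Q₊}⟩ = 0`,
where `W_{Q₊} ⊆ W` and `W_{Q₋} ⊆ W*` are the images of the induced maps
`S₊* → W` and `S₋* → W*`. -/
theorem stmt5
    {Sp Sm V W : Type*}
    [AddCommGroup Sp] [Module ℂ Sp] [FiniteDimensional ℂ Sp]
    [AddCommGroup Sm] [Module ℂ Sm] [FiniteDimensional ℂ Sm]
    [AddCommGroup V] [Module ℂ V] [FiniteDimensional ℂ V]
    [AddCommGroup W] [Module ℂ W] [FiniteDimensional ℂ W]
    (hSp : finrank ℂ Sp = 2) (hSm : finrank ℂ Sm = 2) (hV : finrank ℂ V = 4)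
    (Γ : Sp →ₗ[ℂ] Sm →ₗ[ℂ] V)
    (hΓsurj : Submodule.span ℂ {v : V | ∃ (s : Sp) (t : Sm), Γ s t = v} = ⊤)
    (hΓinj : ∀ (m : ℕ) (a : Fin m → Sp) (b : Fin m → Sm),
      (∑ i, Γ (a i) (b i)) = 0 →
      ∀ (g : Module.Dual ℂ Sp) (h : Module.Dual ℂ Sm),
        (∑ i, g (a i) * h (b i)) = 0)
    (k l : ℕ) (sp : Fin k → Sp) (w : Fin k → W)
    (sm : Fin l → Sm) (f : Fin l → Module.Dual ℂ W) :
    (∑ i, ∑ j, (f j) (w i) • Γ (sp i) (sm j)) = 0 ↔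
      ∀ (g : Module.Dual ℂ Sp) (h : Module.Dual ℂ Sm),
        (∑ j, h (sm j) • f j) (∑ i, g (sp i) • w i) = 0 :=
  stmt5_general Γ hΓinj k l sp w sm f
end

section
/- Let W be a complex symplectic vector space of dimension 4 and S = ℂ⁴ the spin representation of so(5,ℂ) with its symplectic form, Λ²(S) ≅ ℂ·π_S ⊕ V. If Q ∈ S ⊗ W has rank 2 as a map W* → S and squares to zero, and the image of the dual map S* → W is Lagrangian, then: (a) if the image of W* → S is a symplectic subspace of S, the image of [Q,−] : S ⊗ W → V is all of V (Q is topological); (b) if the image of W* → S is Lagrangian in S, the image of [Q,−] is a proper subspace of V. -/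
/-!
Nondegeneracy of `ω` on `W` identifies the image of `[Q,−]` with the span of the `Γ x t` with
`x ∈ ImS` and `t ∈ S`. In a Darboux basis `e₁, f₁, e₂, f₂` of `S` the bivector dual to `π_S` is
`e₁ ∧ f₁ + e₂ ∧ f₂`, so `Γ e₁ f₁ + Γ e₂ f₂ = 0`. If `ImS = span {e₁, f₁}` is symplectic, this
relation puts `Γ e₂ f₂` into the image, which then contains `Γ` of any two basis vectors, hence
all of `V`. If `ImS = span {e₁, e₂}` is Lagrangian, the image lies in the span of
`Γ e₁ e₂, Γ e₁ f₁, Γ e₁ f₂, Γ e₂ f₁`, which has dimension at most `4 < 5`.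
-/

open Module Submodule

section DarbouxFrames

variable {K S : Type*} [Field K] [AddCommGroup S] [Module K S]

theorem LinearMap.SeparatingLeft.surjective [FiniteDimensional K S] {ω : S →ₗ[K] S →ₗ[K] K}
    (hω : ω.SeparatingLeft) : Function.Surjective ω :=
  (injective_iff_surjective_of_finrank_eq_finrank Subspace.dual_finrank_eq.symm).mp
    (ker_eq_bot.mp (separatingLeft_iff_ker_eq_bot.mp hω))

structure IsDarbouxFrame (ω : S →ₗ[K] S →ₗ[K] K) (e₁ f₁ e₂ f₂ : S) : Prop where
  apply_e₁_f₁ : ω e₁ f₁ = 1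
  apply_e₂_f₂ : ω e₂ f₂ = 1
  apply_e₁_e₂ : ω e₁ e₂ = 0
  apply_e₁_f₂ : ω e₁ f₂ = 0
  apply_f₁_e₂ : ω f₁ e₂ = 0
  apply_f₁_f₂ : ω f₁ f₂ = 0

namespace IsDarbouxFrame

variable {ω : S →ₗ[K] S →ₗ[K] K} {e₁ f₁ e₂ f₂ : S} (hF : IsDarbouxFrame ω e₁ f₁ e₂ f₂)
  (hω : ω.IsAlt)
include hF hω

theorem apply_combination (a b c d : K) :
    ω e₁ (a • e₁ + b • f₁ + c • e₂ + d • f₂) = b ∧ ω f₁ (a • e₁ + b • f₁ + c • e₂ + d • f₂) = -a ∧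
      ω e₂ (a • e₁ + b • f₁ + c • e₂ + d • f₂) = d ∧
      ω f₂ (a • e₁ + b • f₁ + c • e₂ + d • f₂) = -c := by
  refine ⟨?_, ?_, ?_, ?_⟩ <;>
  simp only [map_add, map_smul, smul_eq_mul, hω.self_eq_zero, ← hω.neg e₁ f₁, ← hω.neg e₂ f₂,
    ← hω.neg e₁ e₂, ← hω.neg e₁ f₂, ← hω.neg f₁ e₂, ← hω.neg f₁ f₂, hF.apply_e₁_f₁,
    hF.apply_e₂_f₂, hF.apply_e₁_e₂, hF.apply_e₁_f₂, hF.apply_f₁_e₂, hF.apply_f₁_f₂] <;>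
  ring

theorem linearIndependent : LinearIndependent K ![e₁, f₁, e₂, f₂] := by
  rw [Fintype.linearIndependent_iff]
  intro c hc
  simp only [Fin.sum_univ_four, Matrix.cons_val] at hc
  obtain ⟨h₁, h₂, h₃, h₄⟩ := hF.apply_combination hω (c 0) (c 1) (c 2) (c 3)
  simp only [hc, map_zero] at h₁ h₂ h₃ h₄
  intro i
  fin_cases i <;> simp only [Fin.zero_eta, Fin.mk_one, Fin.reduceFinMk]
  exacts [by linear_combination h₂, by linear_combination -h₁, by linear_combination h₄,
    by linear_combination -h₃]

theorem span_eq_top (hS : finrank K S = 4) : span K (Set.range ![e₁, f₁, e₂, f₂]) = ⊤ :=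
  (hF.linearIndependent hω).span_eq_top_of_card_eq_finrank (by rw [Fintype.card_fin, hS])

theorem eq_top_of_mem (hS : finrank K S = 4) {p : Submodule K S} (h₁ : e₁ ∈ p) (h₂ : f₁ ∈ p)
    (h₃ : e₂ ∈ p) (h₄ : f₂ ∈ p) : p = ⊤ := by
  rw [eq_top_iff, ← hF.span_eq_top hω hS, span_le]
  rintro _ ⟨i, rfl⟩
  fin_cases i
  exacts [h₁, h₂, h₃, h₄]

theorem eq_sum (hnd : ω.SeparatingLeft) (hS : finrank K S = 4) (y : S) :
    y = (-ω f₁ y) • e₁ + ω e₁ y • f₁ + (-ω f₂ y) • e₂ + ω e₂ y • f₂ := by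
  set r := y - ((-ω f₁ y) • e₁ + ω e₁ y • f₁ + (-ω f₂ y) • e₂ + ω e₂ y • f₂)
  suffices r = 0 from sub_eq_zero.mp this
  obtain ⟨h₁, h₂, h₃, h₄⟩ := hF.apply_combination hω (-ω f₁ y) (ω e₁ y) (-ω f₂ y) (ω e₂ y)
  have hr : LinearMap.ker (ω.flip r) = ⊤ := by
    refine hF.eq_top_of_mem hω hS ?_ ?_ ?_ ?_ <;>
    rw [LinearMap.mem_ker, LinearMap.flip_apply, map_sub] <;>
    simp only [h₁, h₂, h₃, h₄, neg_neg, sub_self]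
  refine hnd r fun v => ?_
  rw [← hω.neg, neg_eq_zero, ← LinearMap.flip_apply, ← LinearMap.mem_ker, hr]
  exact mem_top

theorem apply_eq (hnd : ω.SeparatingLeft) (hS : finrank K S = 4) (x y : S) :
    ω x y = ω x e₁ * ω y f₁ - ω x f₁ * ω y e₁ + ω x e₂ * ω y f₂ - ω x f₂ * ω y e₂ := by
  conv_lhs => rw [hF.eq_sum hω hnd hS y]
  simp only [map_add, map_smul, smul_eq_mul, ← hω.neg _ y]
  ring

theorem dual_apply_eq [FiniteDimensional K S] (hnd : ω.SeparatingLeft) (hS : finrank K S = 4)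
    {π : Dual K S →ₗ[K] Dual K S →ₗ[K] K} (hπ : ∀ x y, π (ω x) (ω y) = ω x y) (α β : Dual K S) :
    π α β = α e₁ * β f₁ - α f₁ * β e₁ + α e₂ * β f₂ - α f₂ * β e₂ := by
  obtain ⟨x, rfl⟩ := hnd.surjective α
  obtain ⟨y, rfl⟩ := hnd.surjective β
  rw [hπ, hF.apply_eq hω hnd hS]

theorem apply_add_apply_eq_zero [FiniteDimensional K S] (hnd : ω.SeparatingLeft)
    (hS : finrank K S = 4) {π : Dual K S →ₗ[K] Dual K S →ₗ[K] K}
    (hπ : ∀ x y, π (ω x) (ω y) = ω x y) {V : Type*} [AddCommGroup V] [Module K V]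
    {Γ : S →ₗ[K] S →ₗ[K] V}
    (hΓπ : ∀ (m : ℕ) (a b : Fin m → S), (∃ c : K, ∀ α β : Dual K S,
      ∑ i, (α (a i) * β (b i) - α (b i) * β (a i)) = c * π α β) → ∑ i, Γ (a i) (b i) = 0) :
    Γ e₁ f₁ + Γ e₂ f₂ = 0 := by
  have hπ' : ∀ α β : Dual K S, ∑ i, (α (![e₁, e₂] i) * β (![f₁, f₂] i)
      - α (![f₁, f₂] i) * β (![e₁, e₂] i)) = 1 * π α β := fun α β => by
    rw [hF.dual_apply_eq hω hnd hS hπ, Fin.sum_univ_two]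
    simp only [Matrix.cons_val_zero, Matrix.cons_val_one]
    ring
  simpa [Fin.sum_univ_two] using hΓπ 2 ![e₁, e₂] ![f₁, f₂] ⟨1, hπ'⟩

end IsDarbouxFrame

theorem LinearMap.SeparatingLeft.exists_apply_eq_one {ω : S →ₗ[K] S →ₗ[K] K}
    (hnd : ω.SeparatingLeft) {x : S} (hx : x ≠ 0) : ∃ y, ω x y = 1 := by
  obtain ⟨y, hy⟩ : ∃ y, ω x y ≠ 0 := by
    by_contra! h
    exact hx (hnd x h)
  exact ⟨(ω x y)⁻¹ • y, by rw [map_smul, smul_eq_mul, inv_mul_cancel₀ hy]⟩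

-- For `ω e f = 1`, the projection onto the `ω`-orthogonal complement of `span K {e, f}`.
def orthProj (ω : S →ₗ[K] S →ₗ[K] K) (e f t : S) : S := t - ω e t • f + ω f t • e

section Existence

variable {ω : S →ₗ[K] S →ₗ[K] K} (hω : ω.IsAlt) (hnd : ω.SeparatingLeft)
include hω

theorem apply_orthProj_left {e f : S} (h : ω e f = 1) (t : S) : ω e (orthProj ω e f t) = 0 := by
  simp only [orthProj, map_add, map_sub, map_smul, smul_eq_mul, h, hω.self_eq_zero]
  ring

theorem apply_orthProj_right {e f : S} (h : ω e f = 1) (t : S) :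
    ω f (orthProj ω e f t) = 0 := by
  simp only [orthProj, map_add, map_sub, map_smul, smul_eq_mul, ← hω.neg e f, h,
    hω.self_eq_zero]
  ring

include hnd

theorem exists_isDarbouxFrame_of_apply_eq_zero {e₁ f₁ e₂ : S} (h₁ : ω e₁ f₁ = 1)
    (he : ω e₁ e₂ = 0) (hf : ω f₁ e₂ = 0) (h₂ : e₂ ≠ 0) :
    ∃ f₂, IsDarbouxFrame ω e₁ f₁ e₂ f₂ := by
  obtain ⟨u, hu⟩ := hnd.exists_apply_eq_one h₂
  refine ⟨orthProj ω e₁ f₁ u, h₁, ?_, he, apply_orthProj_left hω h₁ u, hf,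
    apply_orthProj_right hω h₁ u⟩
  simp only [orthProj, map_add, map_sub, map_smul, smul_eq_mul, ← hω.neg e₁ e₂,
    ← hω.neg f₁ e₂, he, hf, hu]
  ring

theorem exists_isDarbouxFrame_of_apply_eq_one (hS : 2 < finrank K S)
    {e₁ f₁ : S} (h₁ : ω e₁ f₁ = 1) : ∃ e₂ f₂, IsDarbouxFrame ω e₁ f₁ e₂ f₂ := by
  obtain ⟨t, ht⟩ : ∃ t, orthProj ω e₁ f₁ t ≠ 0 := by
    by_contra! h
    have hspan : span K (Set.range ![e₁, f₁]) = ⊤ := by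
      refine eq_top_iff.mpr fun t _ => ?_
      have ht : t = ω e₁ t • f₁ - ω f₁ t • e₁ := by
        have ht₀ := h t
        rw [orthProj] at ht₀
        linear_combination (norm := module) ht₀
      rw [ht]
      exact sub_mem (smul_mem _ _ (subset_span ⟨1, rfl⟩)) (smul_mem _ _ (subset_span ⟨0, rfl⟩))
    have := finrank_range_le_card (R := K) ![e₁, f₁]
    rw [Set.finrank, hspan, finrank_top, Fintype.card_fin] at this
    omega
  exact ⟨_, exists_isDarbouxFrame_of_apply_eq_zero hω hnd h₁ (apply_orthProj_left hω h₁ t)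
    (apply_orthProj_right hω h₁ t) ht⟩

theorem exists_isDarbouxFrame_of_isotropic {e₁ e₂ : S} (hli : LinearIndependent K ![e₁, e₂])
    (h : ω e₁ e₂ = 0) : ∃ f₁ f₂, IsDarbouxFrame ω e₁ f₁ e₂ f₂ := by
  obtain ⟨g, hg⟩ := hnd.exists_apply_eq_one (x := e₂) (by simpa using hli.ne_zero 1)
  -- Complete `e₂, g` by way of `e₁ + c • e₂`, which is orthogonal to both, then shear `g`.
  set c := ω g e₁
  have hx : e₁ + c • e₂ ≠ 0 := fun h₀ =>
    one_ne_zero (LinearIndependent.pair_iff.mp hli 1 c (by rwa [one_smul])).1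
  obtain ⟨y, hF⟩ := exists_isDarbouxFrame_of_apply_eq_zero hω hnd hg
    (by simp [← hω.neg e₁ e₂, h, hω.self_eq_zero])
    (by simp only [map_add, map_smul, smul_eq_mul, ← hω.neg e₂ g, hg, c]; ring) hx
  have hy : ω e₁ y = 1 := by
    simpa [hF.apply_e₁_f₂] using hF.apply_e₂_f₂
  refine ⟨y, g + c • y, hy, ?_, h, ?_, ?_, ?_⟩
  · simp [hg, hF.apply_e₁_f₂]
  · simp only [map_add, map_smul, smul_eq_mul, hy, c, ← hω.neg g e₁]
    ring
  · rw [← hω.neg, hF.apply_e₁_f₂, neg_zero]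
  · simp [← hω.neg g y, hF.apply_f₁_f₂, hω.self_eq_zero]

end Existence

theorem Submodule.exists_linearIndependent_eq_span_pair [FiniteDimensional K S]
    {P : Submodule K S} (hP : finrank K P = 2) :
    ∃ e₁ e₂ : S, LinearIndependent K ![e₁, e₂] ∧ P = span K {e₁, e₂} := by
  let b := Module.finBasisOfFinrankEq K P hP
  have hb : P.subtype ∘ b = ![(b 0 : S), b 1] := by
    ext i; fin_cases i <;> rfl
  refine ⟨b 0, b 1, hb ▸ b.linearIndependent.map' P.subtype P.ker_subtype, ?_⟩
  rw [← Matrix.range_cons_cons_empty, ← hb, Set.range_comp, span_image, b.span_eq, map_top,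
    range_subtype]

namespace IsDarbouxFrame

variable {V : Type*} [AddCommGroup V] [Module K V] {Γ : S →ₗ[K] S →ₗ[K] V}
  {ω : S →ₗ[K] S →ₗ[K] K} {e₁ f₁ e₂ f₂ : S} (hF : IsDarbouxFrame ω e₁ f₁ e₂ f₂)
  (hω : ω.IsAlt) (hS : finrank K S = 4) (hΓ : Γ.IsAlt) (hrel : Γ e₁ f₁ + Γ e₂ f₂ = 0)
include hF hω hS

theorem apply_mem (φ : S →ₗ[K] V) {M : Submodule K V} (h₁ : φ e₁ ∈ M) (h₂ : φ f₁ ∈ M)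
    (h₃ : φ e₂ ∈ M) (h₄ : φ f₂ ∈ M) (t : S) : φ t ∈ M := by
  have hφ : M.comap φ = ⊤ := hF.eq_top_of_mem hω hS h₁ h₂ h₃ h₄
  exact mem_comap.mp (hφ ▸ mem_top)

include hΓ hrel

theorem map₂_eq_top (hΓspan : span K {v | ∃ a b, Γ a b = v} = ⊤) {P : Submodule K S}
    (he₁ : e₁ ∈ P) (hf₁ : f₁ ∈ P) : map₂ Γ P ⊤ = ⊤ := by
  set M := map₂ Γ P ⊤
  have hP : ∀ x ∈ P, ∀ t, Γ x t ∈ M := fun x hx t => apply_mem_map₂ _ hx mem_top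
  have hrel' : Γ e₂ f₂ = -Γ e₁ f₁ := eq_neg_of_add_eq_zero_right hrel
  have he₂ : ∀ t, Γ e₂ t ∈ M := hF.apply_mem hω hS _
    (by rw [← hΓ.neg]; exact neg_mem (hP _ he₁ _)) (by rw [← hΓ.neg]; exact neg_mem (hP _ hf₁ _))
    (by rw [hΓ.self_eq_zero]; exact zero_mem _) (by rw [hrel']; exact neg_mem (hP _ he₁ _))
  have hf₂ : ∀ t, Γ f₂ t ∈ M := hF.apply_mem hω hS _
    (by rw [← hΓ.neg]; exact neg_mem (hP _ he₁ _)) (by rw [← hΓ.neg]; exact neg_mem (hP _ hf₁ _))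
    (by rw [← hΓ.neg, hrel', neg_neg]; exact hP _ he₁ _) (by rw [hΓ.self_eq_zero]; exact zero_mem _)
  rw [eq_top_iff, ← hΓspan, span_le]
  rintro _ ⟨a, b, rfl⟩
  exact hF.apply_mem hω hS (Γ.flip b) (hP _ he₁ b) (hP _ hf₁ b) (he₂ b) (hf₂ b) a

theorem map₂_le_span {P : Submodule K S} (hP : P ≤ span K {e₁, e₂}) :
    map₂ Γ P ⊤ ≤ span K (Set.range ![Γ e₁ e₂, Γ e₁ f₁, Γ e₁ f₂, Γ e₂ f₁]) := by
  set N := span K (Set.range ![Γ e₁ e₂, Γ e₁ f₁, Γ e₁ f₂, Γ e₂ f₁])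
  have hN : ∀ i, ![Γ e₁ e₂, Γ e₁ f₁, Γ e₁ f₂, Γ e₂ f₁] i ∈ N := fun i => subset_span ⟨i, rfl⟩
  have he₁ : ∀ t, Γ e₁ t ∈ N := hF.apply_mem hω hS _
    (by rw [hΓ.self_eq_zero]; exact zero_mem _) (hN 1) (hN 0) (hN 2)
  have he₂ : ∀ t, Γ e₂ t ∈ N := hF.apply_mem hω hS _
    (by rw [← hΓ.neg]; exact neg_mem (hN 0)) (hN 3) (by rw [hΓ.self_eq_zero]; exact zero_mem _)
    (by rw [eq_neg_of_add_eq_zero_right hrel]; exact neg_mem (hN 1))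
  refine map₂_le.mpr fun x hx t _ => ?_
  obtain ⟨a, b, rfl⟩ := mem_span_pair.mp (hP hx)
  simp only [map_add, map_smul, LinearMap.add_apply, LinearMap.smul_apply]
  exact add_mem (smul_mem _ _ (he₁ t)) (smul_mem _ _ (he₂ t))

end IsDarbouxFrame

theorem span_sum_apply_smul_eq_map₂ {W V : Type*} [AddCommGroup W] [Module K W]
    [FiniteDimensional K W] [AddCommGroup V] [Module K V] {ω : W →ₗ[K] W →ₗ[K] K}
    (hω : ω.IsAlt) (hnd : ω.SeparatingLeft) {k : ℕ} (s : Fin k → S) (w : Fin k → W)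
    (Γ : S →ₗ[K] S →ₗ[K] V) :
    span K {v | ∃ (u : W) (t : S), ∑ i, ω (w i) u • Γ (s i) t = v} =
      map₂ Γ (span K {x | ∃ g : Dual K W, ∑ i, g (w i) • s i = x}) ⊤ := by
  let L : Dual K W →ₗ[K] S := ∑ i, (Dual.eval K W (w i)).smulRight (s i)
  have hL : ∀ g, L g = ∑ i, g (w i) • s i := fun g => by simp [L]
  have hspan : span K {x | ∃ g : Dual K W, ∑ i, g (w i) • s i = x} = LinearMap.range L := by
    simp_rw [← hL]
    exact span_eq (LinearMap.range L)
  have hsum : ∀ u t, ∑ i, ω (w i) u • Γ (s i) t = Γ (L (ω.flip u)) t := fun u t => by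
    simp [hL, map_sum]
  have hsurj : Function.Surjective ω.flip := LinearMap.SeparatingLeft.surjective <|
    LinearMap.flip_separatingLeft.mpr (hω.isRefl.nondegenerate_iff_separatingLeft.mpr hnd).2
  rw [hspan]
  refine le_antisymm (span_le.mpr ?_) (map₂_le.mpr ?_)
  · rintro _ ⟨u, t, rfl⟩
    rw [hsum]
    exact apply_mem_map₂ _ (LinearMap.mem_range_self _ _) mem_top
  · rintro _ ⟨g, rfl⟩ t -
    obtain ⟨u, rfl⟩ := hsurj g
    rw [← hsum]
    exact subset_span ⟨u, t, rfl⟩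

end DarbouxFrames

theorem stmt7_general
    {S V W : Type*}
    [AddCommGroup S] [Module ℂ S] [FiniteDimensional ℂ S]
    [AddCommGroup V] [Module ℂ V]
    [AddCommGroup W] [Module ℂ W] [FiniteDimensional ℂ W]
    (hS : finrank ℂ S = 4) (hV : finrank ℂ V = 5)
    (ωS : S →ₗ[ℂ] S →ₗ[ℂ] ℂ) (hωSalt : ∀ s : S, ωS s s = 0)
    (hωSnd : ∀ s : S, (∀ t : S, ωS s t = 0) → s = 0)
    (πS : Module.Dual ℂ S →ₗ[ℂ] Module.Dual ℂ S →ₗ[ℂ] ℂ)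
    (hπS : ∀ s t : S, πS (ωS s) (ωS t) = ωS s t)
    (Γ : S →ₗ[ℂ] S →ₗ[ℂ] V) (hΓalt : ∀ s : S, Γ s s = 0)
    (hΓker : ∀ (m : ℕ) (a b : Fin m → S),
      (∑ i, Γ (a i) (b i)) = 0 ↔
        ∃ lam : ℂ, ∀ α β : Module.Dual ℂ S,
          (∑ i, (α (a i) * β (b i) - α (b i) * β (a i))) = lam * πS α β)
    (hΓsurj : Submodule.span ℂ {v : V | ∃ a b : S, Γ a b = v} = ⊤)
    (ω : W →ₗ[ℂ] W →ₗ[ℂ] ℂ) (hωalt : ∀ u : W, ω u u = 0)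
    (hωnd : ∀ u : W, (∀ v : W, ω u v = 0) → u = 0)
    (k : ℕ) (s : Fin k → S) (w : Fin k → W)
    -- the images of the maps W* → S and S* → W induced by Q
    (ImS : Submodule ℂ S)
    (hImS : ImS = Submodule.span ℂ
      {x : S | ∃ g : Module.Dual ℂ W, (∑ i, g (w i) • s i) = x})
    -- Q has rank 2
    (hrank : finrank ℂ ImS = 2)
    -- the image of [Q,−] : S ⊗ W → V
    (ImBr : Submodule ℂ V)
    (hImBr : ImBr = Submodule.span ℂ
      {v : V | ∃ (u : W) (t : S), (∑ i, ω (w i) u • Γ (s i) t) = v}) :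
    ((∀ x ∈ ImS, x ≠ 0 → ∃ y ∈ ImS, ωS x y ≠ 0) → ImBr = ⊤) ∧
    ((∀ x ∈ ImS, ∀ y ∈ ImS, ωS x y = 0) → ImBr ≠ ⊤) := by
  have hImBr' : ImBr = map₂ Γ ImS ⊤ := by
    rw [hImBr, hImS]
    exact span_sum_apply_smul_eq_map₂ hωalt hωnd s w Γ
  have hrel : ∀ {e₁ f₁ e₂ f₂}, IsDarbouxFrame ωS e₁ f₁ e₂ f₂ → Γ e₁ f₁ + Γ e₂ f₂ = 0 :=
    fun hF => hF.apply_add_apply_eq_zero hωSalt hωSnd hS hπS fun m a b => (hΓker m a b).2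
  refine ⟨fun hsymp => ?_, fun hiso htop => ?_⟩
  · obtain ⟨e₁, he₁, he₁0⟩ := exists_mem_ne_zero_of_ne_bot (p := ImS) <| by
      rintro rfl
      simp at hrank
    obtain ⟨y, hy, hy0⟩ := hsymp e₁ he₁ he₁0
    obtain ⟨e₂, f₂, hF⟩ := exists_isDarbouxFrame_of_apply_eq_one hωSalt hωSnd (by omega)
      (f₁ := (ωS e₁ y)⁻¹ • y) (by rw [map_smul, smul_eq_mul, inv_mul_cancel₀ hy0])
    rw [hImBr']
    exact hF.map₂_eq_top hωSalt hS hΓalt (hrel hF) hΓsurj he₁ (smul_mem _ _ hy)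
  · obtain ⟨e₁, e₂, hli, rfl⟩ := exists_linearIndependent_eq_span_pair hrank
    obtain ⟨f₁, f₂, hF⟩ := exists_isDarbouxFrame_of_isotropic hωSalt hωSnd hli
      (hiso _ (subset_span (by simp)) _ (subset_span (by simp)))
    have hle := hF.map₂_le_span hωSalt hS hΓalt (hrel hF) le_rfl
    rw [← hImBr', htop, top_le_iff] at hle
    have h4 := finrank_range_le_card (R := ℂ) ![Γ e₁ e₂, Γ e₁ f₁, Γ e₁ f₂, Γ e₂ f₁]
    rw [Set.finrank, hle, finrank_top, hV] at h4
    exact absurd h4 (by decide)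

/-- Dimension 5, rank 2: for a square-zero supercharge `Q = ∑ sᵢ ⊗ wᵢ ∈ S ⊗ W`
of rank 2 whose image in `W` (of the dual map `S* → W`) is Lagrangian:
(a) if the image `ImS` of `W* → S` is a symplectic subspace, then the image of
`[Q,−]` is all of `V` (`Q` is topological);
(b) if `ImS` is Lagrangian, the image of `[Q,−]` is a proper subspace of `V`. -/
theorem stmt7
    {S V W : Type*}
    [AddCommGroup S] [Module ℂ S] [FiniteDimensional ℂ S]
    [AddCommGroup V] [Module ℂ V] [FiniteDimensional ℂ V]
    [AddCommGroup W] [Module ℂ W] [FiniteDimensional ℂ W]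
    (hS : finrank ℂ S = 4) (hV : finrank ℂ V = 5) (hW : finrank ℂ W = 4)
    (ωS : S →ₗ[ℂ] S →ₗ[ℂ] ℂ) (hωSalt : ∀ s : S, ωS s s = 0)
    (hωSnd : ∀ s : S, (∀ t : S, ωS s t = 0) → s = 0)
    (πS : Module.Dual ℂ S →ₗ[ℂ] Module.Dual ℂ S →ₗ[ℂ] ℂ)
    (hπS : ∀ s t : S, πS (ωS s) (ωS t) = ωS s t)
    (Γ : S →ₗ[ℂ] S →ₗ[ℂ] V) (hΓalt : ∀ s : S, Γ s s = 0)
    (hΓker : ∀ (m : ℕ) (a b : Fin m → S),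
      (∑ i, Γ (a i) (b i)) = 0 ↔
        ∃ lam : ℂ, ∀ α β : Module.Dual ℂ S,
          (∑ i, (α (a i) * β (b i) - α (b i) * β (a i))) = lam * πS α β)
    (hΓsurj : Submodule.span ℂ {v : V | ∃ a b : S, Γ a b = v} = ⊤)
    (ω : W →ₗ[ℂ] W →ₗ[ℂ] ℂ) (hωalt : ∀ u : W, ω u u = 0)
    (hωnd : ∀ u : W, (∀ v : W, ω u v = 0) → u = 0)
    (k : ℕ) (s : Fin k → S) (w : Fin k → W)
    -- the images of the maps W* → S and S* → W induced by Q
    (ImS : Submodule ℂ S)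
    (hImS : ImS = Submodule.span ℂ
      {x : S | ∃ g : Module.Dual ℂ W, (∑ i, g (w i) • s i) = x})
    (ImW : Submodule ℂ W)
    (hImW : ImW = Submodule.span ℂ
      {x : W | ∃ f : Module.Dual ℂ S, (∑ i, f (s i) • w i) = x})
    -- Q has rank 2
    (hrank : finrank ℂ ImS = 2)
    -- Q squares to zero
    (hsq : (∑ i, ∑ j, ω (w i) (w j) • Γ (s i) (s j)) = 0)
    -- the image of the dual map S* → W is Lagrangian
    (hLagW : (∀ u ∈ ImW, ∀ v ∈ ImW, ω u v = 0) ∧ finrank ℂ ImW = 2)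
    -- the image of [Q,−] : S ⊗ W → V
    (ImBr : Submodule ℂ V)
    (hImBr : ImBr = Submodule.span ℂ
      {v : V | ∃ (u : W) (t : S), (∑ i, ω (w i) u • Γ (s i) t) = v}) :
    ((∀ x ∈ ImS, x ≠ 0 → ∃ y ∈ ImS, ωS x y ≠ 0) → ImBr = ⊤) ∧
    ((∀ x ∈ ImS, ∀ y ∈ ImS, ωS x y = 0) → ImBr ≠ ⊤) :=
  stmt7_general hS hV ωS hωSalt hωSnd πS hπS Γ hΓalt hΓker hΓsurj ω hωalt hωnd k s w ImS hImS hrank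
    ImBr hImBr
end

section
/- Let 𝔄 be a supersymmetry algebra in dimension n ≥ 3, i.e. a super Lie algebra (so(n,ℂ) ⊕ 𝔤_R) ⋉ ΠΣ ⊕ V with Σ a spinorial representation and Γ : Sym²(Σ) → V a nondegenerate equivariant pairing. Suppose Q ∈ Σ is a nonzero square-zero supercharge such that the line ℂQ is invariant under the twisted so(n)-action (id, φ) : so(n) → so(n) ⊕ 𝔤_R for some Lie algebra homomorphism φ : so(n) → 𝔤_R acting trivially on V. Then [Q,−] : Σ → V is surjective. -/
open Module

attribute [local instance 100] LieRing.ofAssociativeRing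

/-!
The twisted operators `ρS X + ρR (φ X)` act on `V` through `ρV X`, because the R-symmetry
leaves `Γ` invariant; so they make `Γ` equivariant, and since they preserve the line `ℂQ` the
image of `Γ Q` is an `so(n)`-subrepresentation of `V`. It is nonzero by nondegeneracy of `Γ`,
hence all of `V` by irreducibility.
-/

theorem LinearMap.mapsTo_range_of_equivariant_of_mem_span_singleton
    {R M N : Type*} [CommRing R] [AddCommGroup M] [Module R M] [AddCommGroup N] [Module R N]
    (Γ : M →ₗ[R] M →ₗ[R] N) (S : M →ₗ[R] M) (B : N →ₗ[R] N)
    (hΓ : ∀ a b : M, Γ (S a) b + Γ a (S b) = B (Γ a b))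
    {Q : M} (hQ : S Q ∈ Submodule.span R {Q}) :
    Set.MapsTo B (LinearMap.range (Γ Q)) (LinearMap.range (Γ Q)) := by
  rintro _ ⟨b, rfl⟩
  obtain ⟨c, hc⟩ := Submodule.mem_span_singleton.mp hQ
  refine ⟨c • b + S b, ?_⟩
  rw [← hΓ, ← hc, map_add, map_smul, LinearMap.map_smul₂]

theorem stmt9_general
    {g gR : Type*} [LieRing g] [LieAlgebra ℂ g] [LieRing gR] [LieAlgebra ℂ gR]
    {Sg V : Type*}
    [AddCommGroup Sg] [Module ℂ Sg]
    [AddCommGroup V] [Module ℂ V]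
    (ρS : g →ₗ⁅ℂ⁆ Module.End ℂ Sg)
    (ρV : g →ₗ⁅ℂ⁆ Module.End ℂ V)
    (ρR : gR →ₗ⁅ℂ⁆ Module.End ℂ Sg)
    (Γ : Sg →ₗ[ℂ] Sg →ₗ[ℂ] V)
    (hΓequiv : ∀ (X : g) (a b : Sg),
      Γ (ρS X a) b + Γ a (ρS X b) = ρV X (Γ a b))
    (hΓRinv : ∀ (Y : gR) (a b : Sg),
      Γ (ρR Y a) b + Γ a (ρR Y b) = 0)
    (hΓnd : ∀ a : Sg, a ≠ 0 → ∃ b : Sg, Γ a b ≠ 0)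
    (hirr : ∀ U : Submodule ℂ V, (∀ (X : g), ∀ v ∈ U, ρV X v ∈ U) →
      U = ⊥ ∨ U = ⊤)
    (φ : g →ₗ⁅ℂ⁆ gR)
    (Q : Sg) (hQ0 : Q ≠ 0)
    (hinv : ∀ X : g, ρS X Q + ρR (φ X) Q ∈ Submodule.span ℂ {Q}) :
    Function.Surjective fun b : Sg => Γ Q b := by
  have htwisted : ∀ (X : g) (a b : Sg), Γ ((ρS X + ρR (φ X)) a) b + Γ a ((ρS X + ρR (φ X)) b)
      = ρV X (Γ a b) := by
    intro X a b
    simp only [LinearMap.add_apply, map_add]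
    rw [add_add_add_comm, hΓequiv, hΓRinv, add_zero]
  have hrange : ∀ X : g, ∀ v ∈ LinearMap.range (Γ Q), ρV X v ∈ LinearMap.range (Γ Q) :=
    fun X _ hv => Γ.mapsTo_range_of_equivariant_of_mem_span_singleton _ _ (htwisted X) (hinv X) hv
  rcases hirr _ hrange with hbot | htop
  · obtain ⟨b, hb⟩ := hΓnd Q hQ0
    exact absurd (LinearMap.congr_fun (LinearMap.range_eq_bot.mp hbot) b) hb
  · exact LinearMap.range_eq_top.mp htop

/-- In dimension `n ≥ 3`, if a nonzero square-zero supercharge `Q ∈ Σ` spans a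
line invariant under the `φ`-twisted `so(n)`-action `(id, φ) : so(n) → so(n) ⊕ 𝔤_R`,
then `[Q,−] : Σ → V` is surjective (`Q` is a topological supercharge).
Here `g` plays the role of `so(n,ℂ)` acting irreducibly on `V = ℂⁿ`,
`gR` is the R-symmetry Lie algebra acting trivially on `V`, and `Γ` is the
nondegenerate equivariant pairing `Sym²(Σ) → V`. -/
theorem stmt9
    {g gR : Type*} [LieRing g] [LieAlgebra ℂ g] [LieRing gR] [LieAlgebra ℂ gR]
    {Sg V : Type*}
    [AddCommGroup Sg] [Module ℂ Sg] [FiniteDimensional ℂ Sg]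
    [AddCommGroup V] [Module ℂ V] [FiniteDimensional ℂ V]
    (ρS : g →ₗ⁅ℂ⁆ Module.End ℂ Sg)
    (ρV : g →ₗ⁅ℂ⁆ Module.End ℂ V)
    (ρR : gR →ₗ⁅ℂ⁆ Module.End ℂ Sg)
    (hcomm : ∀ (X : g) (Y : gR), ρS X * ρR Y = ρR Y * ρS X)
    (Γ : Sg →ₗ[ℂ] Sg →ₗ[ℂ] V)
    (hΓsym : ∀ a b : Sg, Γ a b = Γ b a)
    (hΓequiv : ∀ (X : g) (a b : Sg),
      Γ (ρS X a) b + Γ a (ρS X b) = ρV X (Γ a b))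
    (hΓRinv : ∀ (Y : gR) (a b : Sg),
      Γ (ρR Y a) b + Γ a (ρR Y b) = 0)
    (hΓnd : ∀ a : Sg, a ≠ 0 → ∃ b : Sg, Γ a b ≠ 0)
    (hdim : 3 ≤ finrank ℂ V)
    (hirr : ∀ U : Submodule ℂ V, (∀ (X : g), ∀ v ∈ U, ρV X v ∈ U) →
      U = ⊥ ∨ U = ⊤)
    (φ : g →ₗ⁅ℂ⁆ gR)
    (Q : Sg) (hQ0 : Q ≠ 0) (hQsq : Γ Q Q = 0)
    (hinv : ∀ X : g, ρS X Q + ρR (φ X) Q ∈ Submodule.span ℂ {Q}) :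
    Function.Surjective fun b : Sg => Γ Q b :=
  stmt9_general ρS ρV ρR Γ hΓequiv hΓRinv hΓnd hirr φ Q hQ0 hinv
end

section
/- Identify the complexified positive Weyl spinor representation of Spin(1,9) with (𝕆 ⊗_ℝ ℂ)², and the vector-valued pairing Γ₁₀ by Γ₁₀((Q,Q'),(Q,Q')) = (2 Q·Q', 2tr(Q·Q̄) − 2tr(Q'·Q̄'), 2tr(Q·Q̄) + 2tr(Q'·Q̄')) ∈ 𝕆_ℂ ⊕ ℂ ⊕ ℂ. Then a spinor (Q,Q') satisfies Γ₁₀((Q,Q'),(Q,Q')) = 0 if and only if Q·Q' = 0, N(Q) = 0 and N(Q') = 0. -/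
open Module

/-! Since `Q·Q̄ = N(Q)·1` is fixed by conjugation, `tr(Q·Q̄) = 2 N(Q)`. The two scalar components
of `Γ₁₀` are therefore `4 N(Q) ∓ 4 N(Q')`, and they vanish together exactly when
`N(Q) = N(Q') = 0`. -/

theorem tr_mul_conj_self_eq_two_mul {R A : Type*} [CommRing R] [AddCommGroup A] [Module R A]
    [IsDomain R] [Module.IsTorsionFree R A]
    (mul : A →ₗ[R] A →ₗ[R] A) (e : A) (he0 : e ≠ 0) (conj : A →ₗ[R] A) (hconje : conj e = e)
    (N tr : A → R) (hNe : ∀ x : A, mul x (conj x) = N x • e)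
    (htr : ∀ x : A, x + conj x = tr x • e) (x : A) :
    tr (mul x (conj x)) = 2 * N x := by
  have h : (2 * N x) • e = tr (mul x (conj x)) • e := by
    rw [← htr, hNe, map_smul, hconje, two_mul, add_smul]
  exact (smul_left_injective R he0 h).symm

theorem sub_eq_zero_and_add_eq_zero_iff {R : Type*} [Ring R] [NoZeroDivisors R] [NeZero (2 : R)]
    (a b : R) : a - b = 0 ∧ a + b = 0 ↔ a = 0 ∧ b = 0 := by
  constructor
  · rintro ⟨hsub, hadd⟩
    obtain rfl := sub_eq_zero.mp hsub
    have ha : a = 0 := (mul_eq_zero.mp ((two_mul a).trans hadd)).resolve_left two_ne_zero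
    exact ⟨ha, ha⟩
  · rintro ⟨rfl, rfl⟩
    simp

theorem stmt15_general
    {A : Type*} [AddCommGroup A] [Module ℂ A]
    (mul : A →ₗ[ℂ] A →ₗ[ℂ] A) (e : A) (he0 : e ≠ 0)
    (conj : A →ₗ[ℂ] A) (hconje : conj e = e)
    (N : A → ℂ) (tr : A → ℂ)
    (hNe : ∀ x : A, mul x (conj x) = N x • e)
    (htr : ∀ x : A, x + conj x = tr x • e)
    (Q Q' : A) :
    ((2 : ℂ) • mul Q Q' = 0 ∧
      2 * tr (mul Q (conj Q)) - 2 * tr (mul Q' (conj Q')) = 0 ∧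
      2 * tr (mul Q (conj Q)) + 2 * tr (mul Q' (conj Q')) = 0) ↔
    (mul Q Q' = 0 ∧ N Q = 0 ∧ N Q' = 0) := by
  simp only [tr_mul_conj_self_eq_two_mul mul e he0 conj hconje N tr hNe htr,
    sub_eq_zero_and_add_eq_zero_iff, smul_eq_zero, mul_eq_zero, two_ne_zero, false_or]

/-- Spin(1,9): identifying the positive Weyl spinor representation with pairs
`(Q, Q')` of complexified octonions and the vector-valued pairing by
`Γ₁₀((Q,Q'),(Q,Q')) = (2·Q·Q', 2tr(Q·Q̄) − 2tr(Q'·Q̄'), 2tr(Q·Q̄) + 2tr(Q'·Q̄'))`,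
a spinor `(Q,Q')` satisfies `Γ₁₀((Q,Q'),(Q,Q')) = 0` if and only if
`Q·Q' = 0`, `N(Q) = 0` and `N(Q') = 0`. -/
theorem stmt15
    {A : Type*} [AddCommGroup A] [Module ℂ A] [FiniteDimensional ℂ A]
    (hdim : finrank ℂ A = 8)
    (mul : A →ₗ[ℂ] A →ₗ[ℂ] A) (e : A) (he0 : e ≠ 0)
    (he : ∀ x : A, mul e x = x ∧ mul x e = x)
    (conj : A →ₗ[ℂ] A) (hconje : conj e = e)
    (N : A → ℂ) (tr : A → ℂ)
    (hNe : ∀ x : A, mul x (conj x) = N x • e)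
    (htr : ∀ x : A, x + conj x = tr x • e)
    (hNmul : ∀ x y : A, N (mul x y) = N x * N y)
    (hLcancel : ∀ x y : A, mul (conj x) (mul x y) = N x • y)
    (hRcancel : ∀ x y : A, mul (mul x y) (conj y) = N y • x)
    (Q Q' : A) :
    ((2 : ℂ) • mul Q Q' = 0 ∧
      2 * tr (mul Q (conj Q)) - 2 * tr (mul Q' (conj Q')) = 0 ∧
      2 * tr (mul Q (conj Q)) + 2 * tr (mul Q' (conj Q')) = 0) ↔
    (mul Q Q' = 0 ∧ N Q = 0 ∧ N Q' = 0) :=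
  stmt15_general mul e he0 conj hconje N tr hNe htr Q Q'
end

section
/- Let V = ℂ⁶ with the semi-spin representations S₊ = ℂ⁴, S₋ = S₊* of so(6,ℂ) ≅ sl(4,ℂ), and equivariant isomorphisms Λ²(S₊) ≅ V ≅ Λ²(S₋). Let W₊, W₋ be complex symplectic vector spaces of dimension 2 each, and Q = Q₊ + Q₋ ∈ S₊ ⊗ W₊ ⊕ S₋ ⊗ W₋ a supercharge of rank (1,1), defining lines W*_{Q₊} ⊆ S₊ and W*_{Q₋} ⊆ S₋ ≅ S₊*. Then Q squares to zero automatically, and: (a) if the natural pairing ⟨W*_{Q₋}, W*_{Q₊}⟩ = 0 then the image of [Q,−] in V is a proper (4-dimensional) subspace; (b) if ⟨W*_{Q₋}, W*_{Q₊}⟩ ≠ 0 then [Q,−] : S₊ ⊗ W₊ ⊕ S₋ ⊗ W₋ → V is surjective. -/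
open Module

/-! The image `P = Γp qp S` is three-dimensional and isotropic for `w`, because
`vol ![qp, s, qp, t] = 0`; in the six-dimensional `V` it is therefore Lagrangian. Hence
`Γm qm α ∈ P` iff `Γm qm α` is orthogonal to `P`, i.e. iff `qm qp • α = α qp • qm`. These `α` form
the line through `qm` when `qm qp ≠ 0`, and the hyperplane `α qp = 0` when `qm qp = 0`. Since
`dim (P ⊔ Γm qm S*) = dim P + dim S* - dim {α | Γm qm α ∈ P} = 7 - dim {α | Γm qm α ∈ P}`,
the image of `[Q, -]` has dimension `6` in the first case and `4` in the second. -/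

theorem Module.Basis.sumExtend_inl {K V ι : Type*} [Field K] [AddCommGroup V] [Module K V]
    {v : ι → V} (hv : LinearIndependent K v) (i : ι) : Basis.sumExtend hv (Sum.inl i) = v i := by
  rw [Basis.sumExtend, Basis.reindex_apply, Basis.extend_apply_self]
  rfl

theorem Module.Basis.exists_castAdd_eq {K V : Type*} [Field K] [AddCommGroup V] [Module K V]
    [FiniteDimensional K V] {k m : ℕ} {v : Fin k → V} (hv : LinearIndependent K v)
    (h : finrank K V = k + m) :
    ∃ b : Basis (Fin (k + m)) K V, ∀ i, b (Fin.castAdd m i) = v i := by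
  let b := Basis.sumExtend hv
  have : Finite (Fin k ⊕ Basis.sumExtendIndex hv) := Module.Finite.finite_basis b
  have : Finite (Basis.sumExtendIndex hv) := _root_.Finite.sum_right (Fin k)
  have := Fintype.ofFinite (Basis.sumExtendIndex hv)
  have hcard : Fintype.card (Basis.sumExtendIndex hv) = m := by
    have := Module.finrank_eq_card_basis b
    rw [Fintype.card_sum, Fintype.card_fin] at this
    omega
  refine ⟨b.reindex ((Equiv.sumCongr (Equiv.refl _) (Fintype.equivFinOfCardEq hcard)).trans
    finSumFinEquiv), fun i => ?_⟩
  rw [Basis.reindex_apply, Equiv.symm_trans_apply, finSumFinEquiv_symm_apply_castAdd]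
  exact Basis.sumExtend_inl hv i

theorem AlternatingMap.mem_span_singleton_of_forall_eq_zero {K S : Type*} [Field K]
    [AddCommGroup S] [Module K S] [FiniteDimensional K S] (hS : finrank K S = 4)
    {vol : S [⋀^Fin 4]→ₗ[K] K} (hvol : vol ≠ 0) {q s : S} (hq : q ≠ 0)
    (h : ∀ c d, vol ![q, s, c, d] = 0) : s ∈ K ∙ q := by
  by_contra hs
  have hqs : LinearIndependent K ![q, s] :=
    (LinearIndependent.pair_iff' hq).2 fun a ha => hs (Submodule.mem_span_singleton.2 ⟨a, ha⟩)
  obtain ⟨b, hb⟩ := Basis.exists_castAdd_eq hqs (m := 2) hS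
  have hb' : ⇑b = ![q, s, b 2, b 3] := by
    funext i
    fin_cases i
    exacts [hb 0, hb 1, rfl, rfl]
  exact (vol.map_basis_ne_zero_iff b).2 hvol (hb' ▸ h (b 2) (b 3))

theorem Module.Dual.eq_smul_of_forall_mul_eq {K S : Type*} [Field K] [AddCommGroup S]
    [Module K S] {f g : Dual K S} {s : S} (hs : f s ≠ 0) (h : ∀ t, f s * g t = f t * g s) :
    g = (g s / f s) • f := by
  ext t
  rw [LinearMap.smul_apply, smul_eq_mul, div_mul_eq_mul_div, eq_div_iff hs]
  linear_combination h t

theorem Submodule.finrank_sup_range_add_finrank_comap {K A B : Type*} [Field K]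
    [AddCommGroup A] [Module K A] [FiniteDimensional K A]
    [AddCommGroup B] [Module K B] [FiniteDimensional K B] (Q : Submodule K B) (f : A →ₗ[K] B) :
    finrank K ↥(Q ⊔ LinearMap.range f) + finrank K (Q.comap f) = finrank K Q + finrank K A := by
  have hsup := Submodule.finrank_sup_add_finrank_inf_eq Q (LinearMap.range f)
  have hf := LinearMap.finrank_range_add_finrank_ker f
  have hres := LinearMap.finrank_range_add_finrank_ker (f.domRestrict (Q.comap f))
  rw [LinearMap.range_domRestrict, Submodule.map_comap_eq, inf_comm, LinearMap.ker_domRestrict,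
    (Submodule.comapSubtypeEquivOfLe (LinearMap.ker_le_comap f)).finrank_eq] at hres
  omega

section

variable {K S V : Type*} [Field K] [AddCommGroup S] [Module K S] [FiniteDimensional K S]
  [AddCommGroup V] [Module K V]
  {Γp : S →ₗ[K] S →ₗ[K] V} {w : LinearMap.BilinForm K V} {vol : S [⋀^Fin 4]→ₗ[K] K}

theorem finrank_range_Γp (hS : finrank K S = 4) (hΓp : ∀ s, Γp s s = 0) (hvol : vol ≠ 0)
    (hw : ∀ a b c d, w (Γp a b) (Γp c d) = vol ![a, b, c, d]) {q : S} (hq : q ≠ 0) :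
    finrank K (LinearMap.range (Γp q)) = 3 := by
  have hker : LinearMap.ker (Γp q) = K ∙ q := by
    refine le_antisymm (fun s hs => ?_) ((Submodule.span_singleton_le_iff_mem _ _).2 (hΓp q))
    refine vol.mem_span_singleton_of_forall_eq_zero hS hvol hq fun c d => ?_
    rw [← hw, LinearMap.mem_ker.1 hs, map_zero, LinearMap.zero_apply]
  have := LinearMap.finrank_range_add_finrank_ker (Γp q)
  rw [hker, finrank_span_singleton hq, hS] at this
  omega

theorem orthogonal_range_Γp [FiniteDimensional K V] (hS : finrank K S = 4) (hV : finrank K V = 6)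
    (hΓp : ∀ s, Γp s s = 0) (hwnd : w.SeparatingLeft) (hvol : vol ≠ 0)
    (hw : ∀ a b c d, w (Γp a b) (Γp c d) = vol ![a, b, c, d]) {q : S} (hq : q ≠ 0) :
    w.flip.orthogonal (LinearMap.range (Γp q)) = LinearMap.range (Γp q) := by
  have hnd : w.flip.Nondegenerate := (LinearMap.BilinForm.Nondegenerate.ofSeparatingLeft hwnd).flip
  refine (Submodule.eq_of_le_of_finrank_eq ?_ ?_).symm
  · rintro _ ⟨s, rfl⟩ _ ⟨t, rfl⟩
    rw [LinearMap.BilinForm.flip_apply, hw]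
    exact vol.map_eq_zero_of_eq _ (i := 0) (j := 2) rfl (by decide)
  · rw [LinearMap.BilinForm.finrank_orthogonal hnd, hV, finrank_range_Γp hS hΓp hvol hw hq]

variable {Γm : Dual K S →ₗ[K] Dual K S →ₗ[K] V}

theorem Γm_mem_range_Γp_iff [FiniteDimensional K V] (hS : finrank K S = 4)
    (hV : finrank K V = 6) (hΓp : ∀ s, Γp s s = 0) (hwnd : w.SeparatingLeft) (hvol : vol ≠ 0)
    (hw : ∀ a b c d, w (Γp a b) (Γp c d) = vol ![a, b, c, d])
    (hm : ∀ α β s t, w (Γm α β) (Γp s t) = α s * β t - α t * β s) {q : S} (hq : q ≠ 0)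
    (f α : Dual K S) : Γm f α ∈ LinearMap.range (Γp q) ↔ ∀ t, f q * α t = f t * α q := by
  rw [← orthogonal_range_Γp hS hV hΓp hwnd hvol hw hq, LinearMap.BilinForm.mem_orthogonal_iff]
  simp only [LinearMap.mem_range, forall_exists_index, forall_apply_eq_imp_iff,
    LinearMap.BilinForm.flip_apply, hm, sub_eq_zero]

theorem finrank_comap_Γm_range_Γp_of_apply_ne_zero [FiniteDimensional K V] (hS : finrank K S = 4)
    (hV : finrank K V = 6) (hΓp : ∀ s, Γp s s = 0) (hwnd : w.SeparatingLeft) (hvol : vol ≠ 0)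
    (hw : ∀ a b c d, w (Γp a b) (Γp c d) = vol ![a, b, c, d])
    (hm : ∀ α β s t, w (Γm α β) (Γp s t) = α s * β t - α t * β s) {q : S} (hq : q ≠ 0)
    {f : Dual K S} (hfq : f q ≠ 0) :
    finrank K ((LinearMap.range (Γp q)).comap (Γm f)) = 1 := by
  have hcomap : (LinearMap.range (Γp q)).comap (Γm f) = K ∙ f := by
    ext α
    rw [Submodule.mem_comap, Γm_mem_range_Γp_iff hS hV hΓp hwnd hvol hw hm hq,
      Submodule.mem_span_singleton]
    constructor
    · exact fun h => ⟨_, (Dual.eq_smul_of_forall_mul_eq hfq h).symm⟩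
    · rintro ⟨c, rfl⟩ t
      simp only [LinearMap.smul_apply, smul_eq_mul]
      ring
  rw [hcomap, finrank_span_singleton fun h => hfq (by rw [h, LinearMap.zero_apply])]

theorem finrank_comap_Γm_range_Γp_of_apply_eq_zero [FiniteDimensional K V] (hS : finrank K S = 4)
    (hV : finrank K V = 6) (hΓp : ∀ s, Γp s s = 0) (hwnd : w.SeparatingLeft) (hvol : vol ≠ 0)
    (hw : ∀ a b c d, w (Γp a b) (Γp c d) = vol ![a, b, c, d])
    (hm : ∀ α β s t, w (Γm α β) (Γp s t) = α s * β t - α t * β s) {q : S} (hq : q ≠ 0)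
    {f : Dual K S} (hf : f ≠ 0) (hfq : f q = 0) :
    finrank K ((LinearMap.range (Γp q)).comap (Γm f)) = 3 := by
  have hcomap : (LinearMap.range (Γp q)).comap (Γm f) = LinearMap.ker (Dual.eval K S q) := by
    ext α
    rw [Submodule.mem_comap, Γm_mem_range_Γp_iff hS hV hΓp hwnd hvol hw hm hq, LinearMap.mem_ker,
      Dual.eval_apply, hfq]
    simp only [zero_mul, eq_comm (a := (0 : K)), mul_eq_zero]
    obtain ⟨t, ht⟩ : ∃ t, f t ≠ 0 := by
      by_contra! h
      exact hf (LinearMap.ext h)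
    exact ⟨fun h => (h t).resolve_left ht, fun h _ => Or.inr h⟩
  have := Dual.finrank_ker_add_one_of_ne_zero ((eval_apply_eq_zero_iff K q).not.2 hq)
  rw [Subspace.dual_finrank_eq, hS] at this
  rw [hcomap]
  omega

end

theorem stmt16_general
    {S V : Type*}
    [AddCommGroup S] [Module ℂ S] [FiniteDimensional ℂ S]
    [AddCommGroup V] [Module ℂ V] [FiniteDimensional ℂ V]
    (hS : finrank ℂ S = 4) (hV : finrank ℂ V = 6)
    (Γp : S →ₗ[ℂ] S →ₗ[ℂ] V) (hΓpalt : ∀ s : S, Γp s s = 0)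
    (Γm : Module.Dual ℂ S →ₗ[ℂ] Module.Dual ℂ S →ₗ[ℂ] V)
    (hΓmalt : ∀ α : Module.Dual ℂ S, Γm α α = 0)
    (w : V →ₗ[ℂ] V →ₗ[ℂ] ℂ)
    (hwnd : ∀ u : V, (∀ v : V, w u v = 0) → u = 0)
    (vol : AlternatingMap ℂ S ℂ (Fin 4)) (hvol : vol ≠ 0)
    (hw : ∀ a b c d : S, w (Γp a b) (Γp c d) = vol ![a, b, c, d])
    (hm : ∀ (α β : Module.Dual ℂ S) (s t : S),
      w (Γm α β) (Γp s t) = α s * β t - α t * β s)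
    (qp : S) (hqp : qp ≠ 0) (qm : Module.Dual ℂ S) (hqm : qm ≠ 0)
    (Im : Submodule ℂ V)
    (hIm : Im = Submodule.span ℂ
      ({v : V | ∃ s : S, Γp qp s = v} ∪ {v : V | ∃ α : Module.Dual ℂ S, Γm qm α = v})) :
    Γp qp qp = 0 ∧ Γm qm qm = 0 ∧
      (qm qp = 0 → Im ≠ ⊤ ∧ finrank ℂ Im = 4) ∧
      (qm qp ≠ 0 → Im = ⊤) := by
  have hIm' : Im = LinearMap.range (Γp qp) ⊔ LinearMap.range (Γm qm) := by
    rw [hIm, Submodule.span_union, ← Set.range, ← Set.range, ← LinearMap.coe_range,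
      ← LinearMap.coe_range, Submodule.span_eq, Submodule.span_eq]
  have hdim := Submodule.finrank_sup_range_add_finrank_comap (LinearMap.range (Γp qp)) (Γm qm)
  rw [← hIm', finrank_range_Γp hS hΓpalt hvol hw hqp, Subspace.dual_finrank_eq, hS] at hdim
  refine ⟨hΓpalt qp, hΓmalt qm, fun h0 => ?_, fun h0 => ?_⟩
  · rw [finrank_comap_Γm_range_Γp_of_apply_eq_zero hS hV hΓpalt hwnd hvol hw hm hqp hqm h0] at hdim
    refine ⟨fun htop => ?_, by omega⟩
    rw [htop, finrank_top, hV] at hdim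
    omega
  · rw [finrank_comap_Γm_range_Γp_of_apply_ne_zero hS hV hΓpalt hwnd hvol hw hm hqp h0] at hdim
    exact Submodule.eq_top_of_finrank_eq (by omega)

/-- Dimension 6, rank (1,1): with `S = S₊` four-dimensional, `S₋ = S₊*`,
`Λ²(S₊) ≅ V ≅ Λ²(S₋)` encoded by the alternating pairings `Γp`, `Γm` valued in
the 6-dimensional space `V`, compatible via the wedge pairing `w` on `V` and a
volume form `vol` on `S₊`. A rank `(1,1)` supercharge is given by nonzero
`q₊ ∈ S₊`, `q₋ ∈ S₊*`. Then `Q` squares to zero automatically, and: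
(a) if `⟨q₋, q₊⟩ = 0`, the image of `[Q,−]` in `V` is a proper 4-dimensional
subspace; (b) if `⟨q₋, q₊⟩ ≠ 0`, then `[Q,−]` is surjective onto `V`. -/
theorem stmt16
    {S V : Type*}
    [AddCommGroup S] [Module ℂ S] [FiniteDimensional ℂ S]
    [AddCommGroup V] [Module ℂ V] [FiniteDimensional ℂ V]
    (hS : finrank ℂ S = 4) (hV : finrank ℂ V = 6)
    (Γp : S →ₗ[ℂ] S →ₗ[ℂ] V) (hΓpalt : ∀ s : S, Γp s s = 0)
    (hΓpsurj : Submodule.span ℂ {v : V | ∃ s t : S, Γp s t = v} = ⊤)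
    (Γm : Module.Dual ℂ S →ₗ[ℂ] Module.Dual ℂ S →ₗ[ℂ] V)
    (hΓmalt : ∀ α : Module.Dual ℂ S, Γm α α = 0)
    (w : V →ₗ[ℂ] V →ₗ[ℂ] ℂ) (hwsym : ∀ u v : V, w u v = w v u)
    (hwnd : ∀ u : V, (∀ v : V, w u v = 0) → u = 0)
    (vol : AlternatingMap ℂ S ℂ (Fin 4)) (hvol : vol ≠ 0)
    (hw : ∀ a b c d : S, w (Γp a b) (Γp c d) = vol ![a, b, c, d])
    (hm : ∀ (α β : Module.Dual ℂ S) (s t : S),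
      w (Γm α β) (Γp s t) = α s * β t - α t * β s)
    (qp : S) (hqp : qp ≠ 0) (qm : Module.Dual ℂ S) (hqm : qm ≠ 0)
    (Im : Submodule ℂ V)
    (hIm : Im = Submodule.span ℂ
      ({v : V | ∃ s : S, Γp qp s = v} ∪ {v : V | ∃ α : Module.Dual ℂ S, Γm qm α = v})) :
    Γp qp qp = 0 ∧ Γm qm qm = 0 ∧
      (qm qp = 0 → Im ≠ ⊤ ∧ finrank ℂ Im = 4) ∧
      (qm qp ≠ 0 → Im = ⊤) :=
  stmt16_general hS hV Γp hΓpalt Γm hΓmalt w hwnd vol hvol hw hm qp hqp qm hqm Im hIm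
end

section
/- Let V = ℂ⁶ with S₊ = ℂ⁴, S₋ = S₊*, Λ²(S₊) ≅ V, and symplectic spaces W₊, W₋ of dimension 2. A rank (2,2) supercharge Q = Q₊ + Q₋, determining rank-2 subspaces W*_{Q₊} ⊆ S₊ and W*_{Q₋} ⊆ S₋, squares to zero if and only if there is an exact sequence 0 → W*_{Q₊} → S₊ → W_{Q₋} → 0 (i.e. W*_{Q₊} equals the kernel of the surjection S₊ ≅ S₋* → W_{Q₋} dual to Q₋) compatible with the induced volume forms on W*_{Q₊}, W_{Q₋} and S₊. -/
/-!
Pairing `Q² = Γp q₁ q₂ + Γm α₁ α₂` against the spanning vectors `Γp u v` turns `Q² = 0` into the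
identity `vol (q₁, q₂, u, v) = -(α₁ ∧ α₂)(u, v)`, which is exactly the compatibility of volume
forms. Taking `u = q₁` or `u = q₂` kills the left side, so independence of `α₁, α₂` puts `q₁, q₂`
in `ker α₁ ∩ ker α₂`; both spaces are two-dimensional, hence they coincide.
-/

open Module

lemma eq_zero_of_forall_apply_eq_zero_of_span_eq_top {R V M N : Type*} [CommSemiring R]
    [AddCommMonoid V] [Module R V] [AddCommMonoid M] [Module R M]
    [AddCommMonoid N] [Module R N] (w : V →ₗ[R] M →ₗ[R] N)
    (hwnd : ∀ u : V, (∀ v : M, w u v = 0) → u = 0) {s : Set M}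
    (hs : Submodule.span R s = ⊤) {u : V} (h : ∀ v ∈ s, w u v = 0) : u = 0 :=
  hwnd u (LinearMap.congr_fun (LinearMap.ext_on hs (f := w u) (g := 0) h))

section Field

variable {K M : Type*} [Field K] [AddCommGroup M] [Module K M]

lemma LinearIndependent.finrank_span_pair {x y : M} (h : LinearIndependent K ![x, y]) :
    finrank K (Submodule.span K {x, y}) = 2 := by
  rw [← Matrix.range_cons_cons_empty x y ![], finrank_span_eq_card h, Fintype.card_fin]

lemma ker_inf_ker_eq_dualCoannihilator_span_pair (α β : Dual K M) :
    LinearMap.ker α ⊓ LinearMap.ker β = (Submodule.span K {α, β}).dualCoannihilator := by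
  refine SetLike.coe_injective ?_
  rw [Submodule.coe_dualCoannihilator_span]
  ext x
  simp

lemma LinearIndependent.finrank_ker_inf_ker_add_two [FiniteDimensional K M] {α β : Dual K M}
    (h : LinearIndependent K ![α, β]) :
    finrank K (LinearMap.ker α ⊓ LinearMap.ker β : Submodule K M) + 2 = finrank K M := by
  rw [ker_inf_ker_eq_dualCoannihilator_span_pair, ← h.finrank_span_pair, add_comm]
  exact Subspace.finrank_add_finrank_dualCoannihilator_eq _

lemma span_pair_le_ker_inf_ker (vol : AlternatingMap K M K (Fin 4)) {q₁ q₂ : M}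
    {α₁ α₂ : Dual K M} (hα : LinearIndependent K ![α₁, α₂])
    (hvol : ∀ u v : M, vol ![q₁, q₂, u, v] = α₁ v * α₂ u - α₁ u * α₂ v) :
    Submodule.span K {q₁, q₂} ≤ LinearMap.ker α₁ ⊓ LinearMap.ker α₂ := by
  suffices h : ∀ x, (∀ v, vol ![q₁, q₂, x, v] = 0) → α₁ x = 0 ∧ α₂ x = 0 by
    rw [Submodule.span_le]
    rintro x (rfl | rfl)
    · exact h _ fun v ↦ vol.map_eq_zero_of_eq ![x, q₂, x, v] (i := 0) (j := 2) rfl (by decide)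
    · exact h _ fun v ↦ vol.map_eq_zero_of_eq ![q₁, x, x, v] (i := 1) (j := 2) rfl (by decide)
  intro x hx
  have hrel : α₂ x • α₁ + (-α₁ x) • α₂ = 0 := by
    ext v
    have := hvol x v
    rw [hx v] at this
    simp only [LinearMap.add_apply, LinearMap.smul_apply, smul_eq_mul, neg_mul,
      LinearMap.zero_apply]
    linear_combination -this
  obtain ⟨h₂, h₁⟩ := LinearIndependent.pair_iff.mp hα _ _ hrel
  exact ⟨neg_eq_zero.mp h₁, h₂⟩

end Field

lemma add_eq_zero_iff_forall_vol_eq {R S V : Type*} [CommRing R]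
    [AddCommGroup S] [Module R S] [AddCommGroup V] [Module R V]
    (Γp : S →ₗ[R] S →ₗ[R] V) (hΓpsurj : Submodule.span R {v : V | ∃ s t : S, Γp s t = v} = ⊤)
    (Γm : Dual R S →ₗ[R] Dual R S →ₗ[R] V) (w : V →ₗ[R] V →ₗ[R] R)
    (hwnd : ∀ u : V, (∀ v : V, w u v = 0) → u = 0) (vol : AlternatingMap R S R (Fin 4))
    (hw : ∀ a b c d : S, w (Γp a b) (Γp c d) = vol ![a, b, c, d])
    (hm : ∀ (α β : Dual R S) (s t : S), w (Γm α β) (Γp s t) = α s * β t - α t * β s)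
    (q₁ q₂ : S) (α₁ α₂ : Dual R S) :
    Γp q₁ q₂ + Γm α₁ α₂ = 0 ↔ ∀ u v : S, vol ![q₁, q₂, u, v] = α₁ v * α₂ u - α₁ u * α₂ v := by
  have hpair : ∀ u v, w (Γp q₁ q₂ + Γm α₁ α₂) (Γp u v) =
      vol ![q₁, q₂, u, v] - (α₁ v * α₂ u - α₁ u * α₂ v) := by
    intro u v
    rw [map_add, LinearMap.add_apply, hw, hm]
    ring
  constructor
  · intro h u v
    rw [← sub_eq_zero, ← hpair, h, map_zero, LinearMap.zero_apply]
  · intro h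
    refine eq_zero_of_forall_apply_eq_zero_of_span_eq_top w hwnd hΓpsurj ?_
    rintro _ ⟨u, v, rfl⟩
    rw [hpair, h, sub_self]

theorem stmt17_general
    {S V : Type*}
    [AddCommGroup S] [Module ℂ S] [FiniteDimensional ℂ S]
    [AddCommGroup V] [Module ℂ V]
    (hS : finrank ℂ S = 4)
    (Γp : S →ₗ[ℂ] S →ₗ[ℂ] V)
    (hΓpsurj : Submodule.span ℂ {v : V | ∃ s t : S, Γp s t = v} = ⊤)
    (Γm : Module.Dual ℂ S →ₗ[ℂ] Module.Dual ℂ S →ₗ[ℂ] V)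
    (w : V →ₗ[ℂ] V →ₗ[ℂ] ℂ)
    (hwnd : ∀ u : V, (∀ v : V, w u v = 0) → u = 0)
    (vol : AlternatingMap ℂ S ℂ (Fin 4))
    (hw : ∀ a b c d : S, w (Γp a b) (Γp c d) = vol ![a, b, c, d])
    (hm : ∀ (α β : Module.Dual ℂ S) (s t : S),
      w (Γm α β) (Γp s t) = α s * β t - α t * β s)
    (q₁ q₂ : S) (hq : LinearIndependent ℂ ![q₁, q₂])
    (α₁ α₂ : Module.Dual ℂ S) (hα : LinearIndependent ℂ ![α₁, α₂]) :
    Γp q₁ q₂ + Γm α₁ α₂ = 0 ↔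
      (Submodule.span ℂ {q₁, q₂} = LinearMap.ker α₁ ⊓ LinearMap.ker α₂ ∧
        ∀ u v : S, vol ![q₁, q₂, u, v] = α₁ v * α₂ u - α₁ u * α₂ v) := by
  rw [add_eq_zero_iff_forall_vol_eq Γp hΓpsurj Γm w hwnd vol hw hm]
  refine ⟨fun hvol ↦ ⟨?_, hvol⟩, And.right⟩
  refine Submodule.eq_of_le_of_finrank_le (span_pair_le_ker_inf_ker vol hα hvol) ?_
  have hker := hα.finrank_ker_inf_ker_add_two
  rw [hq.finrank_span_pair]
  omega

/-- Dimension 6, rank (2,2): with `S₊` four-dimensional, `S₋ = S₊*`,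
`Λ²(S₊) ≅ V ≅ Λ²(S₋)` encoded by `Γp`, `Γm`, the wedge pairing `w` on `V`
and a volume form `vol` on `S₊`, a rank `(2,2)` supercharge determined by
independent spinors `q₁, q₂ ∈ S₊` and independent functionals `α₁, α₂ ∈ S₊*`
(images of symplectic bases of `W₊*` and `W₋*`) squares to zero iff there is an
exact sequence `0 → W*_{Q₊} → S₊ → W_{Q₋} → 0`, i.e. `span{q₁,q₂}` is the kernel
of the surjection `S₊ → W_{Q₋}` dual to `Q₋`, compatibly with the induced
volume forms. -/
theorem stmt17
    {S V : Type*}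
    [AddCommGroup S] [Module ℂ S] [FiniteDimensional ℂ S]
    [AddCommGroup V] [Module ℂ V] [FiniteDimensional ℂ V]
    (hS : finrank ℂ S = 4) (hV : finrank ℂ V = 6)
    (Γp : S →ₗ[ℂ] S →ₗ[ℂ] V) (hΓpalt : ∀ s : S, Γp s s = 0)
    (hΓpsurj : Submodule.span ℂ {v : V | ∃ s t : S, Γp s t = v} = ⊤)
    (Γm : Module.Dual ℂ S →ₗ[ℂ] Module.Dual ℂ S →ₗ[ℂ] V)
    (hΓmalt : ∀ α : Module.Dual ℂ S, Γm α α = 0)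
    (w : V →ₗ[ℂ] V →ₗ[ℂ] ℂ) (hwsym : ∀ u v : V, w u v = w v u)
    (hwnd : ∀ u : V, (∀ v : V, w u v = 0) → u = 0)
    (vol : AlternatingMap ℂ S ℂ (Fin 4)) (hvol : vol ≠ 0)
    (hw : ∀ a b c d : S, w (Γp a b) (Γp c d) = vol ![a, b, c, d])
    (hm : ∀ (α β : Module.Dual ℂ S) (s t : S),
      w (Γm α β) (Γp s t) = α s * β t - α t * β s)
    (q₁ q₂ : S) (hq : LinearIndependent ℂ ![q₁, q₂])
    (α₁ α₂ : Module.Dual ℂ S) (hα : LinearIndependent ℂ ![α₁, α₂]) :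
    Γp q₁ q₂ + Γm α₁ α₂ = 0 ↔
      (Submodule.span ℂ {q₁, q₂} = LinearMap.ker α₁ ⊓ LinearMap.ker α₂ ∧
        ∀ u v : S, vol ![q₁, q₂, u, v] = α₁ v * α₂ u - α₁ u * α₂ v) :=
  stmt17_general hS Γp hΓpsurj Γm w hwnd vol hw hm q₁ q₂ hq α₁ α₂ hα
end
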